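/- arXiv:1310.1110 — 6 statements merged into one kernel-verified Lean document; each statement's English description precedes it below -/
import Mathlib

section
/- Let ρ_AB, ρ_AC, ρ_BC be fully classical bipartite density matrices on a tripartite system (each diagonal in some product basis of its two factors), with matching single-party marginals. If all the commutators [ρ_AB ⊗ I_C, ρ_AC ⊗ I_B], [ρ_AB ⊗ I_C, ρ_BC ⊗ I_A], and [ρ_AC ⊗ I_B, ρ_BC ⊗ I_A] (with operators appropriately embedded in H_A ⊗ H_B ⊗ H_C) vanish, then there exist orthonormal bases {|a_i⟩} of H_A, {|b_j⟩} of H_B, {|c_k⟩} of H_C and probability distributions p, q, r such that ρ_AB = Σ_{ij} p_{ij}|a_i b_j⟩⟨a_i b_j|, ρ_BC = Σ_{jk} q_{jk}|b_j c_k⟩⟨b_j c_k|, and ρ_AC = Σ_{ik} r_{ik}|a_i c_k⟩⟨a_i c_k|. -/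
open Matrix BigOperators
open scoped Kronecker ComplexOrder

namespace QMarginal

abbrev Mat (n : ℕ) := Matrix (Fin n) (Fin n) ℂ
abbrev Bip (m n : ℕ) := Matrix (Fin m × Fin n) (Fin m × Fin n) ℂ
abbrev Tri (dA dB dC : ℕ) := Matrix (Fin dA × Fin dB × Fin dC) (Fin dA × Fin dB × Fin dC) ℂ

/-- partial trace over the third system -/
noncomputable def trC {dA dB dC : ℕ} (ρ : Tri dA dB dC) : Bip dA dB :=
  fun x y => ∑ c : Fin dC, ρ (x.1, x.2, c) (y.1, y.2, c)

/-- partial trace over the second system -/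
noncomputable def trB {dA dB dC : ℕ} (ρ : Tri dA dB dC) : Bip dA dC :=
  fun x y => ∑ b : Fin dB, ρ (x.1, b, x.2) (y.1, b, y.2)

/-- partial trace over the first system -/
noncomputable def trA {dA dB dC : ℕ} (ρ : Tri dA dB dC) : Bip dB dC :=
  fun x y => ∑ a : Fin dA, ρ (a, x.1, x.2) (a, y.1, y.2)

/-- partial trace of a bipartite matrix over the right factor -/
noncomputable def trR {m n : ℕ} (ρ : Bip m n) : Mat m :=
  fun i j => ∑ b : Fin n, ρ (i, b) (j, b)

/-- partial trace of a bipartite matrix over the left factor -/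
noncomputable def trL {m n : ℕ} (ρ : Bip m n) : Mat n :=
  fun i j => ∑ a : Fin m, ρ (a, i) (a, j)

def IsDensity {ι : Type*} [Fintype ι] [DecidableEq ι] (ρ : Matrix ι ι ℂ) : Prop :=
  ρ.PosSemidef ∧ ρ.trace = 1

/-- rank-one projector onto a vector -/
def projV {ι : Type*} (v : ι → ℂ) : Matrix ι ι ℂ := fun i j => v i * star (v j)

def prod2 {m n : ℕ} (v : Fin m → ℂ) (w : Fin n → ℂ) : Fin m × Fin n → ℂ :=
  fun x => v x.1 * w x.2

def prod3 {dA dB dC : ℕ} (u : Fin dA → ℂ) (v : Fin dB → ℂ) (w : Fin dC → ℂ) :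
    Fin dA × Fin dB × Fin dC → ℂ :=
  fun x => u x.1 * v x.2.1 * w x.2.2

/-- a family of vectors forming an orthonormal basis -/
def ONB {n : ℕ} (a : Fin n → Fin n → ℂ) : Prop :=
  ∀ i j, (∑ k, star (a i k) * a j k) = if i = j then (1:ℂ) else 0

/-- fully classical bipartite state -/
def FullyClassical {m n : ℕ} (ρ : Bip m n) : Prop :=
  ∃ (a : Fin m → Fin m → ℂ) (b : Fin n → Fin n → ℂ) (p : Fin m → Fin n → ℝ),
    ONB a ∧ ONB b ∧ (∀ i j, 0 ≤ p i j) ∧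
    ρ = ∑ i, ∑ j, (p i j) • projV (prod2 (a i) (b j))

/-- fully classical tripartite state -/
def FullyClassicalTri {dA dB dC : ℕ} (ρ : Tri dA dB dC) : Prop :=
  ∃ (a : Fin dA → Fin dA → ℂ) (b : Fin dB → Fin dB → ℂ) (c : Fin dC → Fin dC → ℂ)
    (f : Fin dA → Fin dB → Fin dC → ℝ),
    ONB a ∧ ONB b ∧ ONB c ∧ (∀ i j k, 0 ≤ f i j k) ∧
    ρ = ∑ i, ∑ j, ∑ k, (f i j k) • projV (prod3 (a i) (b j) (c k))

/-- fully separable tripartite state -/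
def FullySepTri {dA dB dC : ℕ} (ρ : Tri dA dB dC) : Prop :=
  ∃ (N : ℕ) (p : Fin N → ℝ) (u : Fin N → Fin dA → ℂ) (v : Fin N → Fin dB → ℂ)
    (w : Fin N → Fin dC → ℂ),
    (∀ i, 0 ≤ p i) ∧ ρ = ∑ i, (p i) • projV (prod3 (u i) (v i) (w i))

/-- M ⊗ I_C on the tripartite space, M acting on A ⊗ B -/
def embAB {dA dB : ℕ} (M : Bip dA dB) (dC : ℕ) : Tri dA dB dC :=
  fun x y => M (x.1, x.2.1) (y.1, y.2.1) * (if x.2.2 = y.2.2 then 1 else 0)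

/-- M ⊗ I_B on the tripartite space, M acting on A ⊗ C -/
def embAC {dA dC : ℕ} (M : Bip dA dC) (dB : ℕ) : Tri dA dB dC :=
  fun x y => M (x.1, x.2.2) (y.1, y.2.2) * (if x.2.1 = y.2.1 then 1 else 0)

/-- M ⊗ I_A on the tripartite space, M acting on B ⊗ C -/
def embBC {dB dC : ℕ} (M : Bip dB dC) (dA : ℕ) : Tri dA dB dC :=
  fun x y => M (x.2.1, x.2.2) (y.2.1, y.2.2) * (if x.1 = y.1 then 1 else 0)

/-!
Contracting the classical state `ρAB = ∑ p i j • |a i, b j⟩⟨a i, b j|` against `b j` leaves the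
single-party operator `X j = ∑ i, p i j • |a i⟩⟨a i|` on `A`, and `ρAB = ∑ j, X j ⊗ |b j⟩⟨b j|`.
Contracting a vanishing commutator of embedded states against a product vector shows that these
single-party operators commute across states, so on each factor the (Hermitian) operators coming
from the two states touching it have a common orthonormal eigenbasis. In the product of two such
eigenbases every off-diagonal entry of `ρAB` vanishes; a positive semidefinite matrix with no
off-diagonal entries in an orthonormal basis is diagonal there with nonnegative entries, which sum
to its trace `1`.
-/

section Vectors

variable {ι : Type*}

lemma projV_eq_vecMulVec (v : ι → ℂ) : projV v = vecMulVec v (star v) := rfl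

variable [Fintype ι]

lemma projV_mulVec (v u : ι → ℂ) : projV v *ᵥ u = (star v ⬝ᵥ u) • v := by
  rw [projV_eq_vecMulVec, vecMulVec_mulVec, op_smul_eq_smul]

lemma projV_mul_projV (u v : ι → ℂ) :
    projV u * projV v = (star u ⬝ᵥ v) • vecMulVec u (star v) := by
  rw [projV_eq_vecMulVec, projV_eq_vecMulVec, vecMulVec_mul_vecMulVec, vecMulVec_smul]

lemma projV_mul_mul_projV (u v : ι → ℂ) (M : Matrix ι ι ℂ) :
    projV u * M * projV v = (star u ⬝ᵥ M *ᵥ v) • vecMulVec u (star v) := by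
  rw [projV_eq_vecMulVec, projV_eq_vecMulVec, vecMulVec_mul, vecMulVec_mul_vecMulVec,
    dotProduct_mulVec, vecMulVec_smul]

lemma isHermitian_sum_smul_projV {κ : Type*} (d : ι → ℝ) (e : ι → κ → ℂ) :
    (∑ i, d i • projV (e i)).IsHermitian := by
  simp [IsHermitian, conjTranspose_sum, projV_eq_vecMulVec, conjTranspose_vecMulVec]

lemma sum_kronecker {l m n p : Type*} (A : ι → Matrix l m ℂ) (B : Matrix n p ℂ) :
    (∑ i, A i) ⊗ₖ B = ∑ i, A i ⊗ₖ B := by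
  ext x y
  simp [Matrix.sum_apply, Finset.sum_mul]

lemma kronecker_sum {l m n p : Type*} (A : Matrix l m ℂ) (B : ι → Matrix n p ℂ) :
    A ⊗ₖ (∑ i, B i) = ∑ i, A ⊗ₖ B i := by
  ext x y
  simp [Matrix.sum_apply, Finset.mul_sum]

end Vectors

section Prod2

variable {m n : ℕ}

lemma star_prod2 (v : Fin m → ℂ) (w : Fin n → ℂ) :
    star (prod2 v w) = prod2 (star v) (star w) := by
  ext x
  simp [prod2]

lemma prod2_dotProduct_prod2 (u v : Fin m → ℂ) (w z : Fin n → ℂ) :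
    prod2 u w ⬝ᵥ prod2 v z = (u ⬝ᵥ v) * (w ⬝ᵥ z) := by
  simp only [dotProduct, prod2, Fintype.sum_prod_type, Finset.sum_mul_sum]
  exact Finset.sum_congr rfl fun _ _ => Finset.sum_congr rfl fun _ _ => by ring

lemma projV_prod2 (v : Fin m → ℂ) (w : Fin n → ℂ) :
    projV (prod2 v w) = projV v ⊗ₖ projV w := by
  ext x y
  simp only [projV, prod2, kroneckerMap_apply, star_mul']
  ring

lemma kronecker_mulVec_prod2 (A : Mat m) (B : Mat n) (v : Fin m → ℂ) (w : Fin n → ℂ) :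
    (A ⊗ₖ B) *ᵥ prod2 v w = prod2 (A *ᵥ v) (B *ᵥ w) := by
  ext x
  simp only [mulVec, dotProduct, prod2, kroneckerMap_apply, Fintype.sum_prod_type,
    Finset.sum_mul_sum]
  exact Finset.sum_congr rfl fun _ _ => Finset.sum_congr rfl fun _ _ => by ring

lemma star_prod2_dotProduct_kronecker_mulVec_prod2 (A : Mat m) (B : Mat n)
    (a a' : Fin m → ℂ) (b b' : Fin n → ℂ) :
    star (prod2 a b) ⬝ᵥ (A ⊗ₖ B) *ᵥ prod2 a' b' = (star a ⬝ᵥ A *ᵥ a') * (star b ⬝ᵥ B *ᵥ b') := by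
  rw [kronecker_mulVec_prod2, star_prod2, prod2_dotProduct_prod2]

lemma sum_smul_projV_prod2_eq_sum_kronecker_projV (e : Fin m → Fin m → ℂ)
    (f : Fin n → Fin n → ℂ) (p : Fin m → Fin n → ℝ) :
    ∑ i, ∑ j, p i j • projV (prod2 (e i) (f j))
      = ∑ j, (∑ i, p i j • projV (e i)) ⊗ₖ projV (f j) := by
  simp only [sum_kronecker, projV_prod2, smul_kronecker]
  exact Finset.sum_comm

lemma sum_smul_projV_prod2_eq_sum_projV_kronecker (e : Fin m → Fin m → ℂ)
    (f : Fin n → Fin n → ℂ) (p : Fin m → Fin n → ℝ) :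
    ∑ i, ∑ j, p i j • projV (prod2 (e i) (f j))
      = ∑ i, projV (e i) ⊗ₖ ∑ j, p i j • projV (f j) := by
  simp only [kronecker_sum, projV_prod2, kronecker_smul]

end Prod2

namespace ONB

variable {n : ℕ} {a : Fin n → Fin n → ℂ}

lemma star_dotProduct (ha : ONB a) (i j : Fin n) :
    star (a i) ⬝ᵥ a j = if i = j then 1 else 0 :=
  ha i j

lemma sum_projV (ha : ONB a) : ∑ i, projV (a i) = 1 := by
  let U : Mat n := Matrix.of fun i k => star (a i k)
  have hU : U * Uᴴ = 1 := by
    ext i j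
    simpa [U, mul_apply, one_apply] using ha i j
  have hU' : Uᴴ * U = 1 := mul_eq_one_comm.mp hU
  ext x y
  simpa [U, mul_apply, Matrix.sum_apply, projV] using congrFun (congrFun hU' x) y

lemma trace_projV (ha : ONB a) (i : Fin n) : (projV (a i)).trace = 1 := by
  rw [projV_eq_vecMulVec, trace_vecMulVec, dotProduct_comm, ha.star_dotProduct, if_pos rfl]

lemma star_dotProduct_mulVec_eq_zero (ha : ONB a) {X : Mat n} {s t : Fin n} {c : ℂ}
    (hX : X *ᵥ a t = c • a t) (hst : s ≠ t) : star (a s) ⬝ᵥ X *ᵥ a t = 0 := by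
  rw [hX, dotProduct_smul, ha.star_dotProduct, if_neg hst, smul_zero]

lemma sum_smul_projV_mul (ha : ONB a) (d d' : Fin n → ℝ) :
    (∑ i, d i • projV (a i)) * (∑ i, d' i • projV (a i)) = ∑ i, (d i * d' i) • projV (a i) := by
  simp only [Finset.sum_mul, Finset.mul_sum, smul_mul_smul_comm, projV_mul_projV,
    ha.star_dotProduct, ite_smul, one_smul, zero_smul, smul_ite, smul_zero, Finset.sum_ite_eq',
    Finset.mem_univ, if_true]
  rfl

lemma commute_sum_smul_projV (ha : ONB a) (d d' : Fin n → ℝ) :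
    Commute (∑ i, d i • projV (a i)) (∑ i, d' i • projV (a i)) := by
  rw [commute_iff_eq, ha.sum_smul_projV_mul, ha.sum_smul_projV_mul]
  simp_rw [mul_comm]

lemma of_orthonormalBasis (b : OrthonormalBasis (Fin n) ℂ (EuclideanSpace ℂ (Fin n))) :
    ONB fun s => WithLp.ofLp (b s) := by
  intro i j
  have := orthonormal_iff_ite.mp b.orthonormal i j
  rwa [EuclideanSpace.inner_eq_star_dotProduct, dotProduct_comm] at this

end ONB

lemma trace_sum_smul_projV_prod2 {m n : ℕ} {a : Fin m → Fin m → ℂ} {b : Fin n → Fin n → ℂ}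
    (ha : ONB a) (hb : ONB b) (P : Fin m → Fin n → ℝ) :
    (∑ s, ∑ t, P s t • projV (prod2 (a s) (b t))).trace = ((∑ s, ∑ t, P s t : ℝ) : ℂ) := by
  simp [trace_sum, projV_prod2, trace_kronecker, ha.trace_projV, hb.trace_projV]

lemma exists_orthonormalBasis_subordinate {n : ℕ} {κ : Type*} [Fintype κ] [DecidableEq κ]
    {V : κ → Submodule ℂ (EuclideanSpace ℂ (Fin n))} (hV : DirectSum.IsInternal V)
    (hV' : OrthogonalFamily ℂ (fun k => V k) fun k => (V k).subtypeₗᵢ) :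
    ∃ b : OrthonormalBasis (Fin n) ℂ (EuclideanSpace ℂ (Fin n)), ∀ s, ∃ k, b s ∈ V k :=
  ⟨hV.subordinateOrthonormalBasis finrank_euclideanSpace_fin hV',
    fun s => ⟨_, hV.subordinateOrthonormalBasis_subordinate finrank_euclideanSpace_fin s hV'⟩⟩

open Module.End in
lemma exists_ONB_common_eigenvectors {n : ℕ} {ι : Type*} (T : ι → Mat n)
    (hT : ∀ i, (T i).IsHermitian) (hc : Pairwise fun i j => Commute (T i) (T j)) :
    ∃ g : Fin n → Fin n → ℂ, ONB g ∧ ∀ i s, ∃ c : ℂ, T i *ᵥ g s = c • g s := by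
  classical
  let L : ι → Module.End ℂ (EuclideanSpace ℂ (Fin n)) := fun i => (T i).toEuclideanLin
  have hL : ∀ i, (L i).IsSymmetric := fun i => isSymmetric_toEuclideanLin_iff.mpr (hT i)
  have hLc : Pairwise (Function.onFun Commute L) := fun i j hij => by
    rw [Function.onFun, commute_iff_eq, Module.End.mul_eq_comp, Module.End.mul_eq_comp,
      ← toLpLin_mul_same, ← toLpLin_mul_same, (hc hij).eq]
  let V : (ι → ℂ) → Submodule ℂ (EuclideanSpace ℂ (Fin n)) :=
    fun χ => ⨅ i, eigenspace (L i) (χ i)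
  have hV : DirectSum.IsInternal V :=
    LinearMap.IsSymmetric.directSum_isInternal_of_pairwise_commute hL hLc
  -- only finitely many joint eigenspaces are nonzero, and they still span
  have := hV.submodule_iSupIndep.fintypeNeBotOfFiniteDimensional
  obtain ⟨b, hb⟩ := exists_orthonormalBasis_subordinate (DirectSum.isInternal_ne_bot_iff.mpr hV)
    ((LinearMap.IsSymmetric.orthogonalFamily_iInf_eigenspaces hL).comp Subtype.val_injective)
  refine ⟨fun s => WithLp.ofLp (b s), ONB.of_orthonormalBasis b, fun i s => ?_⟩
  obtain ⟨χ, hχ⟩ := hb s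
  have hi : b s ∈ eigenspace (L i) (χ.1 i) := (Submodule.mem_iInf _).mp hχ i
  exact ⟨χ.1 i, congrArg WithLp.ofLp (Module.End.mem_eigenspace_iff.mp hi)⟩

section Diagonal

variable {ι κ : Type*} [Fintype ι] [DecidableEq ι] [Fintype κ] {E : κ → ι → ℂ}

lemma eq_sum_smul_projV_of_offDiag (hE : ∑ s, projV (E s) = 1) {M : Matrix ι ι ℂ}
    (hM : ∀ s t, s ≠ t → star (E s) ⬝ᵥ M *ᵥ E t = 0) :
    M = ∑ s, (star (E s) ⬝ᵥ M *ᵥ E s) • projV (E s) := by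
  calc M = (∑ s, projV (E s)) * M * ∑ t, projV (E t) := by rw [hE, one_mul, mul_one]
    _ = ∑ s, ∑ t, projV (E s) * M * projV (E t) := by rw [Finset.sum_mul, Finset.sum_mul_sum]
    _ = _ := Finset.sum_congr rfl fun s _ => by
      rw [Finset.sum_eq_single s (fun t _ hts => by rw [projV_mul_mul_projV, hM s t hts.symm,
        zero_smul]) (by simp), projV_mul_mul_projV]
      rfl

lemma _root_.Matrix.PosSemidef.exists_eq_sum_smul_projV_of_offDiag
    (hE : ∑ s, projV (E s) = 1) {M : Matrix ι ι ℂ} (hM : M.PosSemidef)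
    (hoff : ∀ s t, s ≠ t → star (E s) ⬝ᵥ M *ᵥ E t = 0) :
    ∃ P : κ → ℝ, (∀ s, 0 ≤ P s) ∧ M = ∑ s, P s • projV (E s) := by
  refine ⟨fun s => (star (E s) ⬝ᵥ M *ᵥ E s).re,
    fun s => (Complex.nonneg_iff.mp (hM.dotProduct_mulVec_nonneg (E s))).1, ?_⟩
  conv_lhs => rw [eq_sum_smul_projV_of_offDiag hE hoff]
  refine Finset.sum_congr rfl fun s _ => ?_
  rw [← Complex.coe_smul, ← Complex.eq_re_of_ofReal_le (r := 0)
    (by simpa using hM.dotProduct_mulVec_nonneg (E s))]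

end Diagonal

noncomputable def contractRight {X Y : Type*} [Fintype Y] (ρ : Matrix (X × Y) (X × Y) ℂ)
    (w : Y → ℂ) : Matrix X X ℂ :=
  Matrix.of fun α β => ∑ x, ∑ y, star (w x) * ρ (α, x) (β, y) * w y

def swapFactors {X Y : Type*} (ρ : Matrix (X × Y) (X × Y) ℂ) : Matrix (Y × X) (Y × X) ℂ :=
  ρ.submatrix Prod.swap Prod.swap

section Contraction

variable {X Y : Type*} [Fintype Y]

lemma contractRight_sum {κ : Type*} (s : Finset κ) (ρ : κ → Matrix (X × Y) (X × Y) ℂ)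
    (w : Y → ℂ) : contractRight (∑ k ∈ s, ρ k) w = ∑ k ∈ s, contractRight (ρ k) w := by
  ext α β
  simp only [contractRight, of_apply, Matrix.sum_apply, Finset.mul_sum, Finset.sum_mul]
  exact (Finset.sum_comm.trans (Finset.sum_congr rfl fun _ _ => Finset.sum_comm)).symm

lemma contractRight_smul (r : ℝ) (ρ : Matrix (X × Y) (X × Y) ℂ) (w : Y → ℂ) :
    contractRight (r • ρ) w = r • contractRight ρ w := by
  ext α β
  simp only [contractRight, of_apply, Matrix.smul_apply, Complex.real_smul, Finset.mul_sum]
  exact Finset.sum_congr rfl fun _ _ => Finset.sum_congr rfl fun _ _ => by ring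

lemma contractRight_kronecker (A : Matrix X X ℂ) (B : Matrix Y Y ℂ) (w : Y → ℂ) :
    contractRight (A ⊗ₖ B) w = (star w ⬝ᵥ B *ᵥ w) • A := by
  ext α β
  simp only [contractRight, of_apply, Matrix.smul_apply, kronecker_apply, dotProduct, mulVec,
    Pi.star_apply, smul_eq_mul, Finset.mul_sum, Finset.sum_mul]
  exact Finset.sum_congr rfl fun _ _ => Finset.sum_congr rfl fun _ _ => by ring

end Contraction

section Embeddings

variable {dA dB dC : ℕ}

lemma sum_sum_mul_eq_mul_sum_sum {Y Z : Type*} [Fintype Y] [Fintype Z] (F : Y → Y → ℂ) (G : Z → Z → ℂ) :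
    ∑ x : Y × Z, ∑ y : Y × Z, F x.1 y.1 * G x.2 y.2 = (∑ a, ∑ b, F a b) * (∑ c, ∑ d, G c d) := by
  simp only [Fintype.sum_prod_type, Finset.sum_mul_sum]

lemma embAB_mul_embAC_apply (ρ₁ : Bip dA dB) (ρ₂ : Bip dA dC) (x y : Fin dA × Fin dB × Fin dC) :
    (embAB ρ₁ dC * embAC ρ₂ dB) x y
      = ∑ z, ρ₁ (x.1, x.2.1) (z, y.2.1) * ρ₂ (z, x.2.2) (y.1, y.2.2) := by
  simp [mul_apply, embAB, embAC, Fintype.sum_prod_type, ite_mul, mul_ite, eq_comm]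

lemma embAC_mul_embAB_apply (ρ₁ : Bip dA dB) (ρ₂ : Bip dA dC) (x y : Fin dA × Fin dB × Fin dC) :
    (embAC ρ₂ dB * embAB ρ₁ dC) x y
      = ∑ z, ρ₂ (x.1, x.2.2) (z, y.2.2) * ρ₁ (z, x.2.1) (y.1, y.2.1) := by
  simp [mul_apply, embAB, embAC, Fintype.sum_prod_type, ite_mul, mul_ite, eq_comm]

lemma contractRight_embAB_mul_embAC (ρ₁ : Bip dA dB) (ρ₂ : Bip dA dC) (w : Fin dB → ℂ)
    (u : Fin dC → ℂ) :
    contractRight (embAB ρ₁ dC * embAC ρ₂ dB) (prod2 w u)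
      = contractRight ρ₁ w * contractRight ρ₂ u := by
  ext α β
  have hz : ∀ z, ∑ x, ∑ y, star (prod2 w u x) * (ρ₁ (α, x.1) (z, y.1) * ρ₂ (z, x.2) (β, y.2))
      * prod2 w u y = contractRight ρ₁ w α z * contractRight ρ₂ u z β := fun z => by
    rw [contractRight, contractRight, of_apply, of_apply, ← sum_sum_mul_eq_mul_sum_sum]
    refine Finset.sum_congr rfl fun x _ => Finset.sum_congr rfl fun y _ => ?_
    simp only [prod2, star_mul']
    ring
  rw [mul_apply, ← Finset.sum_congr rfl fun z _ => hz z]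
  simp only [contractRight, of_apply, embAB_mul_embAC_apply, Finset.mul_sum, Finset.sum_mul]
  exact (Finset.sum_congr rfl fun _ _ => Finset.sum_comm).trans Finset.sum_comm

lemma contractRight_embAC_mul_embAB (ρ₁ : Bip dA dB) (ρ₂ : Bip dA dC) (w : Fin dB → ℂ)
    (u : Fin dC → ℂ) :
    contractRight (embAC ρ₂ dB * embAB ρ₁ dC) (prod2 w u)
      = contractRight ρ₂ u * contractRight ρ₁ w := by
  ext α β
  have hz : ∀ z, ∑ x, ∑ y, star (prod2 w u x) * (ρ₂ (α, x.2) (z, y.2) * ρ₁ (z, x.1) (β, y.1))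
      * prod2 w u y = contractRight ρ₂ u α z * contractRight ρ₁ w z β := fun z => by
    rw [contractRight, contractRight, of_apply, of_apply, mul_comm, ← sum_sum_mul_eq_mul_sum_sum]
    refine Finset.sum_congr rfl fun x _ => Finset.sum_congr rfl fun y _ => ?_
    simp only [prod2, star_mul']
    ring
  rw [mul_apply, ← Finset.sum_congr rfl fun z _ => hz z]
  simp only [contractRight, of_apply, embAC_mul_embAB_apply, Finset.mul_sum, Finset.sum_mul]
  exact (Finset.sum_congr rfl fun _ _ => Finset.sum_comm).trans Finset.sum_comm

lemma commute_contractRight_of_commute_embAB_embAC (ρ₁ : Bip dA dB) (ρ₂ : Bip dA dC)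
    (h : Commute (embAB ρ₁ dC) (embAC ρ₂ dB)) (w : Fin dB → ℂ) (u : Fin dC → ℂ) :
    Commute (contractRight ρ₁ w) (contractRight ρ₂ u) := by
  rw [commute_iff_eq, ← contractRight_embAB_mul_embAC, ← contractRight_embAC_mul_embAB, h.eq]

-- In both lemmas, reindexing by `σ` carries the embeddings in `h` to those in the conclusion
-- definitionally.
lemma commute_embAB_swapFactors_embAC {ρAB : Bip dA dB} {ρBC : Bip dB dC}
    (h : Commute (embAB ρAB dC) (embBC ρBC dA)) :
    Commute (embAB (swapFactors ρAB) dC) (embAC ρBC dA) := by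
  let σ : Fin dA × Fin dB × Fin dC ≃ Fin dB × Fin dA × Fin dC :=
    ⟨fun x => (x.2.1, x.1, x.2.2), fun x => (x.2.1, x.1, x.2.2), fun _ => rfl, fun _ => rfl⟩
  exact h.map (reindexAlgEquiv ℂ ℂ σ)

lemma commute_embAB_swapFactors_embAC_swapFactors {ρAC : Bip dA dC} {ρBC : Bip dB dC}
    (h : Commute (embAC ρAC dB) (embBC ρBC dA)) :
    Commute (embAB (swapFactors ρAC) dB) (embAC (swapFactors ρBC) dA) := by
  let σ : Fin dA × Fin dB × Fin dC ≃ Fin dC × Fin dA × Fin dB :=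
    ⟨fun x => (x.2.2, x.1, x.2.1), fun x => (x.2.1, x.2.2, x.1), fun _ => rfl, fun _ => rfl⟩
  exact h.map (reindexAlgEquiv ℂ ℂ σ)

end Embeddings

section Classical

variable {m n : ℕ}

lemma contractRight_sum_smul_projV_prod2 (e : Fin m → Fin m → ℂ) {f : Fin n → Fin n → ℂ}
    (hf : ONB f) (p : Fin m → Fin n → ℝ) (j₀ : Fin n) :
    contractRight (∑ i, ∑ j, p i j • projV (prod2 (e i) (f j))) (f j₀)
      = ∑ i, p i j₀ • projV (e i) := by
  simp only [contractRight_sum, contractRight_smul, projV_prod2, contractRight_kronecker,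
    projV_mulVec, dotProduct_smul, hf.star_dotProduct, smul_eq_mul]
  simp [ite_smul, eq_comm]

lemma swapFactors_sum_smul_projV_prod2 (e : Fin m → Fin m → ℂ) (f : Fin n → Fin n → ℂ)
    (p : Fin m → Fin n → ℝ) :
    swapFactors (∑ i, ∑ j, p i j • projV (prod2 (e i) (f j)))
      = ∑ j, ∑ i, p i j • projV (prod2 (f j) (e i)) := by
  ext x y
  simp only [swapFactors, submatrix_apply, Matrix.sum_apply, Matrix.smul_apply, projV, prod2,
    Prod.fst_swap, Prod.snd_swap, Complex.real_smul, star_mul']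
  rw [Finset.sum_comm]
  exact Finset.sum_congr rfl fun _ _ => Finset.sum_congr rfl fun _ _ => by ring

end Classical

lemma exists_ONB_eigenvectors_contractRight {m₁ m₂ : ℕ} {ρ₁ : Bip n m₁} {ρ₂ : Bip n m₂}
    {e₁ e₂ : Fin n → Fin n → ℂ} {f₁ : Fin m₁ → Fin m₁ → ℂ} {f₂ : Fin m₂ → Fin m₂ → ℂ}
    {p₁ : Fin n → Fin m₁ → ℝ} {p₂ : Fin n → Fin m₂ → ℝ} (he₁ : ONB e₁) (hf₁ : ONB f₁)
    (he₂ : ONB e₂) (hf₂ : ONB f₂) (hρ₁ : ρ₁ = ∑ i, ∑ j, p₁ i j • projV (prod2 (e₁ i) (f₁ j)))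
    (hρ₂ : ρ₂ = ∑ i, ∑ k, p₂ i k • projV (prod2 (e₂ i) (f₂ k)))
    (h : Commute (embAB ρ₁ m₂) (embAC ρ₂ m₁)) :
    ∃ g : Fin n → Fin n → ℂ, ONB g ∧
      (∀ j s, ∃ c : ℂ, contractRight ρ₁ (f₁ j) *ᵥ g s = c • g s) ∧
      (∀ k s, ∃ c : ℂ, contractRight ρ₂ (f₂ k) *ᵥ g s = c • g s) := by
  have hT₁ := contractRight_sum_smul_projV_prod2 e₁ hf₁ p₁
  have hT₂ := contractRight_sum_smul_projV_prod2 e₂ hf₂ p₂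
  rw [← hρ₁] at hT₁
  rw [← hρ₂] at hT₂
  obtain ⟨g, hg, hT⟩ := exists_ONB_common_eigenvectors
    (Sum.elim (fun j => contractRight ρ₁ (f₁ j)) (fun k => contractRight ρ₂ (f₂ k)))
    (by rintro (j | k) <;> simp only [Sum.elim_inl, Sum.elim_inr, hT₁, hT₂,
      isHermitian_sum_smul_projV])
    (by
      rintro (j | k) (j' | k') -
      · simpa only [Sum.elim_inl, hT₁] using he₁.commute_sum_smul_projV _ _
      · exact commute_contractRight_of_commute_embAB_embAC ρ₁ ρ₂ h _ _
      · exact (commute_contractRight_of_commute_embAB_embAC ρ₁ ρ₂ h _ _).symm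
      · simpa only [Sum.elim_inr, hT₂] using he₂.commute_sum_smul_projV _ _)
  exact ⟨g, hg, fun j => hT (.inl j), fun k => hT (.inr k)⟩

lemma _root_.Matrix.PosSemidef.exists_eq_sum_projV_prod2_of_eigenvectors {m n : ℕ} {ρ : Bip m n}
    (hρ : ρ.PosSemidef) {e a : Fin m → Fin m → ℂ} {f b : Fin n → Fin n → ℂ}
    {p : Fin m → Fin n → ℝ} (he : ONB e) (hf : ONB f) (ha : ONB a) (hb : ONB b)
    (hρe : ρ = ∑ i, ∑ j, p i j • projV (prod2 (e i) (f j)))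
    (hXa : ∀ j s, ∃ c : ℂ, contractRight ρ (f j) *ᵥ a s = c • a s)
    (hYb : ∀ i t, ∃ c : ℂ, contractRight (swapFactors ρ) (e i) *ᵥ b t = c • b t) :
    ∃ P : Fin m → Fin n → ℝ, (∀ s t, 0 ≤ P s t) ∧
      ρ = ∑ s, ∑ t, P s t • projV (prod2 (a s) (b t)) := by
  have hE : ∑ s : Fin m × Fin n, projV (prod2 (a s.1) (b s.2)) = 1 := by
    simp only [Fintype.sum_prod_type, projV_prod2, ← kronecker_sum, ← sum_kronecker, ha.sum_projV,
      hb.sum_projV, one_kronecker_one]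
  have hoff : ∀ s t : Fin m × Fin n, s ≠ t →
      star (prod2 (a s.1) (b s.2)) ⬝ᵥ ρ *ᵥ prod2 (a t.1) (b t.2) = 0 := by
    rintro ⟨s, s'⟩ ⟨t, t'⟩ hne
    rcases ne_or_eq s t with hst | rfl
    · rw [hρe, sum_smul_projV_prod2_eq_sum_kronecker_projV, sum_mulVec, dotProduct_sum]
      refine Finset.sum_eq_zero fun j _ => ?_
      obtain ⟨c, hc⟩ := hXa j t
      rw [hρe, contractRight_sum_smul_projV_prod2 e hf] at hc
      rw [star_prod2_dotProduct_kronecker_mulVec_prod2, ha.star_dotProduct_mulVec_eq_zero hc hst,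
        zero_mul]
    · have hst' : s' ≠ t' := fun h => hne (by rw [h])
      rw [hρe, sum_smul_projV_prod2_eq_sum_projV_kronecker, sum_mulVec, dotProduct_sum]
      refine Finset.sum_eq_zero fun i _ => ?_
      obtain ⟨c, hc⟩ := hYb i t'
      rw [hρe, swapFactors_sum_smul_projV_prod2, contractRight_sum_smul_projV_prod2 f he] at hc
      rw [star_prod2_dotProduct_kronecker_mulVec_prod2, hb.star_dotProduct_mulVec_eq_zero hc hst',
        mul_zero]
  obtain ⟨P, hP, hρP⟩ := hρ.exists_eq_sum_smul_projV_of_offDiag hE hoff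
  exact ⟨fun s t => P (s, t), fun s t => hP _, hρP.trans (Fintype.sum_prod_type _)⟩

lemma IsDensity.exists_eq_sum_projV_prod2_of_eigenvectors {m n : ℕ} {ρ : Bip m n}
    (hρ : IsDensity ρ) {e a : Fin m → Fin m → ℂ} {f b : Fin n → Fin n → ℂ}
    {p : Fin m → Fin n → ℝ} (he : ONB e) (hf : ONB f) (ha : ONB a) (hb : ONB b)
    (hρe : ρ = ∑ i, ∑ j, p i j • projV (prod2 (e i) (f j)))
    (hXa : ∀ j s, ∃ c : ℂ, contractRight ρ (f j) *ᵥ a s = c • a s)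
    (hYb : ∀ i t, ∃ c : ℂ, contractRight (swapFactors ρ) (e i) *ᵥ b t = c • b t) :
    ∃ P : Fin m → Fin n → ℝ, (∀ s t, 0 ≤ P s t) ∧ ∑ s, ∑ t, P s t = 1 ∧
      ρ = ∑ s, ∑ t, P s t • projV (prod2 (a s) (b t)) := by
  obtain ⟨P, hP, hρP⟩ := hρ.1.exists_eq_sum_projV_prod2_of_eigenvectors he hf ha hb hρe hXa hYb
  have htr := hρ.2
  rw [hρP, trace_sum_smul_projV_prod2 ha hb] at htr
  exact ⟨P, hP, mod_cast htr, hρP⟩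

theorem stmt_2_general {dA dB dC : ℕ}
    (ρAB : Bip dA dB) (ρAC : Bip dA dC) (ρBC : Bip dB dC)
    (hdAB : IsDensity ρAB) (hdAC : IsDensity ρAC) (hdBC : IsDensity ρBC)
    (hfcAB : FullyClassical ρAB) (hfcAC : FullyClassical ρAC)
    (hfcBC : FullyClassical ρBC)
    (h1 : embAB ρAB dC * embAC ρAC dB = embAC ρAC dB * embAB ρAB dC)
    (h2 : embAB ρAB dC * embBC ρBC dA = embBC ρBC dA * embAB ρAB dC)
    (h3 : embAC ρAC dB * embBC ρBC dA = embBC ρBC dA * embAC ρAC dB) :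
    ∃ (a : Fin dA → Fin dA → ℂ) (b : Fin dB → Fin dB → ℂ) (c : Fin dC → Fin dC → ℂ)
      (p : Fin dA → Fin dB → ℝ) (q : Fin dB → Fin dC → ℝ) (r : Fin dA → Fin dC → ℝ),
      ONB a ∧ ONB b ∧ ONB c ∧
      (∀ i j, 0 ≤ p i j) ∧ (∀ j k, 0 ≤ q j k) ∧ (∀ i k, 0 ≤ r i k) ∧
      (∑ i, ∑ j, p i j) = 1 ∧ (∑ j, ∑ k, q j k) = 1 ∧ (∑ i, ∑ k, r i k) = 1 ∧
      ρAB = ∑ i, ∑ j, (p i j) • projV (prod2 (a i) (b j)) ∧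
      ρBC = ∑ j, ∑ k, (q j k) • projV (prod2 (b j) (c k)) ∧
      ρAC = ∑ i, ∑ k, (r i k) • projV (prod2 (a i) (c k)) := by
  obtain ⟨aAB, bAB, pAB, haAB, hbAB, -, hAB⟩ := hfcAB
  obtain ⟨aAC, cAC, pAC, haAC, hcAC, -, hAC⟩ := hfcAC
  obtain ⟨bBC, cBC, pBC, hbBC, hcBC, -, hBC⟩ := hfcBC
  obtain ⟨a, ha, haAB', haAC'⟩ :=
    exists_ONB_eigenvectors_contractRight haAB hbAB haAC hcAC hAB hAC h1
  obtain ⟨b, hb, hbAB', hbBC'⟩ :=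
    exists_ONB_eigenvectors_contractRight hbAB haAB hbBC hcBC
      (by rw [hAB, swapFactors_sum_smul_projV_prod2]) hBC (commute_embAB_swapFactors_embAC h2)
  obtain ⟨c, hc, hcAC', hcBC'⟩ :=
    exists_ONB_eigenvectors_contractRight hcAC haAC hcBC hbBC
      (by rw [hAC, swapFactors_sum_smul_projV_prod2])
      (by rw [hBC, swapFactors_sum_smul_projV_prod2])
      (commute_embAB_swapFactors_embAC_swapFactors h3)
  obtain ⟨p, hp, hp1, hpAB⟩ :=
    hdAB.exists_eq_sum_projV_prod2_of_eigenvectors haAB hbAB ha hb hAB haAB' hbAB'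
  obtain ⟨q, hq, hq1, hqBC⟩ :=
    hdBC.exists_eq_sum_projV_prod2_of_eigenvectors hbBC hcBC hb hc hBC hbBC' hcBC'
  obtain ⟨r, hr, hr1, hrAC⟩ :=
    hdAC.exists_eq_sum_projV_prod2_of_eigenvectors haAC hcAC ha hc hAC haAC' hcAC'
  exact ⟨a, b, c, p, q, r, ha, hb, hc, hp, hq, hr, hp1, hq1, hr1, hpAB, hqBC, hrAC⟩

/-- vanishing commutators imply a common product eigenbasis for the
three fully classical bipartite states. -/
theorem stmt_2 {dA dB dC : ℕ}
    (ρAB : Bip dA dB) (ρAC : Bip dA dC) (ρBC : Bip dB dC)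
    (hdAB : IsDensity ρAB) (hdAC : IsDensity ρAC) (hdBC : IsDensity ρBC)
    (hfcAB : FullyClassical ρAB) (hfcAC : FullyClassical ρAC)
    (hfcBC : FullyClassical ρBC)
    (hmA : trR ρAB = trR ρAC) (hmB : trL ρAB = trR ρBC)
    (hmC : trL ρAC = trL ρBC)
    (h1 : embAB ρAB dC * embAC ρAC dB = embAC ρAC dB * embAB ρAB dC)
    (h2 : embAB ρAB dC * embBC ρBC dA = embBC ρBC dA * embAB ρAB dC)
    (h3 : embAC ρAC dB * embBC ρBC dA = embBC ρBC dA * embAC ρAC dB) :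
    ∃ (a : Fin dA → Fin dA → ℂ) (b : Fin dB → Fin dB → ℂ) (c : Fin dC → Fin dC → ℂ)
      (p : Fin dA → Fin dB → ℝ) (q : Fin dB → Fin dC → ℝ) (r : Fin dA → Fin dC → ℝ),
      ONB a ∧ ONB b ∧ ONB c ∧
      (∀ i j, 0 ≤ p i j) ∧ (∀ j k, 0 ≤ q j k) ∧ (∀ i k, 0 ≤ r i k) ∧
      (∑ i, ∑ j, p i j) = 1 ∧ (∑ j, ∑ k, q j k) = 1 ∧ (∑ i, ∑ k, r i k) = 1 ∧
      ρAB = ∑ i, ∑ j, (p i j) • projV (prod2 (a i) (b j)) ∧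
      ρBC = ∑ j, ∑ k, (q j k) • projV (prod2 (b j) (c k)) ∧
      ρAC = ∑ i, ∑ k, (r i k) • projV (prod2 (a i) (c k)) :=
  stmt_2_general ρAB ρAC ρBC hdAB hdAC hdBC hfcAB hfcAC hfcBC h1 h2 h3
end QMarginal
end

section
/- Let ρ_AB, ρ_AC, ρ_BC be fully classical bipartite states. If some commutator among [ρ_AB ⊗ I_C, ρ_AC ⊗ I_B], [ρ_AB ⊗ I_C, ρ_BC ⊗ I_A], [ρ_AC ⊗ I_B, ρ_BC ⊗ I_A] is nonzero, then at least one of the single-party reduced states ρ_A, ρ_B, ρ_C has a repeated eigenvalue (is degenerate). -/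
open Matrix BigOperators
open scoped Kronecker ComplexOrder

namespace QMarginal

/-- a matrix has a repeated eigenvalue -/
def Degenerate {n : ℕ} (ρ : Mat n) : Prop :=
  ∃ (μ : ℂ) (v w : Fin n → ℂ), LinearIndependent ℂ ![v, w] ∧
    ρ *ᵥ v = μ • v ∧ ρ *ᵥ w = μ • w

/-! A fully classical state is diagonal in a product of local orthonormal bases, so each
one-party marginal is diagonal in two local bases, one coming from each state it is a marginal of.
If that marginal has simple spectrum, a vector of one basis and a vector of the other are either
orthogonal or, sharing an eigenvalue, proportional; in both cases their rank-one projectors commute.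
The embedded states are combinations of Kronecker products of such projectors and identities, so
they commute factor by factor. -/

section ProjV

variable {ι : Type*}

lemma projV_smul (t : ℂ) (v : ι → ℂ) : projV (t • v) = (t * star t) • projV v := by
  ext i j
  simp only [projV, Pi.smul_apply, Matrix.smul_apply, smul_eq_mul, star_mul']
  ring

lemma commute_projV_smul_left [Fintype ι] (t : ℂ) (v : ι → ℂ) :
    Commute (projV (t • v)) (projV v) := by
  rw [projV_smul]
  exact (Commute.refl _).smul_left _

lemma commute_projV_of_dotProduct_eq_zero [Fintype ι] {u v : ι → ℂ} (h : star u ⬝ᵥ v = 0) :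
    Commute (projV u) (projV v) := by
  have h' : star v ⬝ᵥ u = 0 := by rw [star_dotProduct, h, star_zero]
  simp only [Commute, SemiconjBy, projV_eq_vecMulVec, vecMulVec_mul_vecMulVec, h, h', zero_smul,
    vecMulVec_zero]

end ProjV

section ONB

variable {n : ℕ} {a : Fin n → Fin n → ℂ}

lemma ONB.dotProduct (ha : ONB a) (i j : Fin n) :
    star (a i) ⬝ᵥ a j = if i = j then 1 else 0 :=
  ha i j

lemma ONB.ne_zero (ha : ONB a) (i : Fin n) : a i ≠ 0 := by
  intro h
  simpa [h] using ha.dotProduct i i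

lemma ONB.sum_mul_star_self (ha : ONB a) (i : Fin n) : ∑ k, a i k * star (a i k) = 1 := by
  simpa [mul_comm] using ha i i

lemma ONB.sum_smul_projV_mulVec (ha : ONB a) (q : Fin n → ℂ) (j : Fin n) :
    (∑ i, q i • projV (a i)) *ᵥ a j = q j • a j := by
  simp [sum_mulVec, smul_mulVec, projV_eq_vecMulVec, vecMulVec_mulVec, ha.dotProduct]

lemma ONB.vecMul_sum_smul_projV (ha : ONB a) (q : Fin n → ℂ) (j : Fin n) :
    star (a j) ᵥ* (∑ i, q i • projV (a i)) = q j • star (a j) := by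
  simp [vecMul_sum, vecMul_smul, projV_eq_vecMulVec, vecMul_vecMulVec, ha.dotProduct]

end ONB

lemma eq_smul_of_not_degenerate {n : ℕ} {ρ : Mat n} (hρ : ¬Degenerate ρ) {u v : Fin n → ℂ}
    {μ : ℂ} (hu : ρ *ᵥ u = μ • u) (hv : ρ *ᵥ v = μ • v) (hv0 : v ≠ 0) : ∃ t : ℂ, u = t • v := by
  by_contra! h
  exact hρ ⟨μ, v, u, (LinearIndependent.pair_iff' hv0).2 fun t ht => h t ht.symm, hv, hu⟩

lemma commute_projV_of_not_degenerate {n : ℕ} {ρ : Mat n} (hρ : ¬Degenerate ρ)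
    {a a' : Fin n → Fin n → ℂ} (ha : ONB a) (ha' : ONB a') {q q' : Fin n → ℂ}
    (hq : ρ = ∑ i, q i • projV (a i)) (hq' : ρ = ∑ i, q' i • projV (a' i)) (i k : Fin n) :
    Commute (projV (a i)) (projV (a' k)) := by
  by_cases hik : star (a i) ⬝ᵥ a' k = 0
  · exact commute_projV_of_dotProduct_eq_zero hik
  have hi : ρ *ᵥ a i = q i • a i := hq ▸ ha.sum_smul_projV_mulVec q i
  have hk : ρ *ᵥ a' k = q' k • a' k := hq' ▸ ha'.sum_smul_projV_mulVec q' k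
  have hqik : q i = q' k := by
    refine mul_right_cancel₀ hik ?_
    calc q i * (star (a i) ⬝ᵥ a' k) = (star (a i) ᵥ* ρ) ⬝ᵥ a' k := by
          rw [hq, ha.vecMul_sum_smul_projV, smul_dotProduct, smul_eq_mul]
      _ = star (a i) ⬝ᵥ (ρ *ᵥ a' k) := (dotProduct_mulVec _ _ _).symm
      _ = q' k * (star (a i) ⬝ᵥ a' k) := by rw [hk, dotProduct_smul, smul_eq_mul]
  rw [hqik] at hi
  obtain ⟨t, ht⟩ := eq_smul_of_not_degenerate hρ hk hi (ha.ne_zero i)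
  rw [ht]
  exact (commute_projV_smul_left t _).symm

lemma trR_classical {m n : ℕ} (a : Fin m → Fin m → ℂ) {b : Fin n → Fin n → ℂ} (hb : ONB b)
    (p : Fin m → Fin n → ℝ) :
    trR (∑ i, ∑ j, p i j • projV (prod2 (a i) (b j))) =
      ∑ i, ((∑ j, p i j : ℝ) : ℂ) • projV (a i) := by
  ext x y
  simp only [trR, Matrix.sum_apply, Matrix.smul_apply, projV, prod2, Complex.real_smul,
    smul_eq_mul, star_mul', Complex.ofReal_sum, Finset.sum_mul]
  rw [Finset.sum_comm]
  refine Finset.sum_congr rfl fun i _ => ?_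
  rw [Finset.sum_comm]
  refine Finset.sum_congr rfl fun j _ => ?_
  calc _ = (p i j : ℂ) * (a i x * star (a i y)) * ∑ k, b j k * star (b j k) := by
        rw [Finset.mul_sum]
        exact Finset.sum_congr rfl fun k _ => by ring
    _ = _ := by rw [hb.sum_mul_star_self, mul_one]

lemma trL_classical {m n : ℕ} {a : Fin m → Fin m → ℂ} (ha : ONB a) (b : Fin n → Fin n → ℂ)
    (p : Fin m → Fin n → ℝ) :
    trL (∑ i, ∑ j, p i j • projV (prod2 (a i) (b j))) =
      ∑ j, ((∑ i, p i j : ℝ) : ℂ) • projV (b j) := by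
  ext x y
  simp only [trL, Matrix.sum_apply, Matrix.smul_apply, projV, prod2, Complex.real_smul,
    smul_eq_mul, star_mul', Complex.ofReal_sum, Finset.sum_mul]
  conv_rhs => rw [Finset.sum_comm]
  rw [Finset.sum_comm]
  refine Finset.sum_congr rfl fun i _ => ?_
  rw [Finset.sum_comm]
  refine Finset.sum_congr rfl fun j _ => ?_
  calc _ = (p i j : ℂ) * (b j x * star (b j y)) * ∑ k, a i k * star (a i k) := by
        rw [Finset.mul_sum]
        exact Finset.sum_congr rfl fun k _ => by ring
    _ = _ := by rw [ha.sum_mul_star_self, mul_one]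

lemma embAB_classical {dA dB : ℕ} (a : Fin dA → Fin dA → ℂ) (b : Fin dB → Fin dB → ℂ)
    (p : Fin dA → Fin dB → ℝ) (dC : ℕ) :
    embAB (∑ i, ∑ j, p i j • projV (prod2 (a i) (b j))) dC =
      ∑ i, ∑ j, (p i j : ℂ) • (projV (a i) ⊗ₖ (projV (b j) ⊗ₖ (1 : Mat dC))) := by
  ext x y
  simp only [embAB, Matrix.sum_apply, Matrix.smul_apply, kroneckerMap_apply, projV, prod2,
    Complex.real_smul, smul_eq_mul, star_mul', Finset.sum_mul, one_apply]
  exact Finset.sum_congr rfl fun i _ => Finset.sum_congr rfl fun j _ => by ring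

lemma embAC_classical {dA dC : ℕ} (a : Fin dA → Fin dA → ℂ) (c : Fin dC → Fin dC → ℂ)
    (p : Fin dA → Fin dC → ℝ) (dB : ℕ) :
    embAC (∑ i, ∑ k, p i k • projV (prod2 (a i) (c k))) dB =
      ∑ i, ∑ k, (p i k : ℂ) • (projV (a i) ⊗ₖ ((1 : Mat dB) ⊗ₖ projV (c k))) := by
  ext x y
  simp only [embAC, Matrix.sum_apply, Matrix.smul_apply, kroneckerMap_apply, projV, prod2,
    Complex.real_smul, smul_eq_mul, star_mul', Finset.sum_mul, one_apply]
  exact Finset.sum_congr rfl fun i _ => Finset.sum_congr rfl fun j _ => by ring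

lemma embBC_classical {dB dC : ℕ} (b : Fin dB → Fin dB → ℂ) (c : Fin dC → Fin dC → ℂ)
    (p : Fin dB → Fin dC → ℝ) (dA : ℕ) :
    embBC (∑ j, ∑ k, p j k • projV (prod2 (b j) (c k))) dA =
      ∑ j, ∑ k, (p j k : ℂ) • ((1 : Mat dA) ⊗ₖ (projV (b j) ⊗ₖ projV (c k))) := by
  ext x y
  simp only [embBC, Matrix.sum_apply, Matrix.smul_apply, kroneckerMap_apply, projV, prod2,
    Complex.real_smul, smul_eq_mul, star_mul', Finset.sum_mul, one_apply]
  exact Finset.sum_congr rfl fun i _ => Finset.sum_congr rfl fun j _ => by ring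

lemma commute_kronecker {α l m : Type*} [CommSemiring α] [Fintype l] [Fintype m]
    {P P' : Matrix l l α} {Q Q' : Matrix m m α} (hP : Commute P P') (hQ : Commute Q Q') :
    Commute (P ⊗ₖ Q) (P' ⊗ₖ Q') := by
  rw [Commute, SemiconjBy, ← mul_kronecker_mul, ← mul_kronecker_mul, hP.eq, hQ.eq]

lemma commute_sum_sum_smul {R A : Type*} [CommSemiring R] [Semiring A] [Algebra R A]
    {ι κ ι' κ' : Type*} [Fintype ι] [Fintype κ] [Fintype ι'] [Fintype κ']
    (x : ι → κ → R) (y : ι' → κ' → R) {S : ι → κ → A} {T : ι' → κ' → A}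
    (h : ∀ i j i' j', Commute (S i j) (T i' j')) :
    Commute (∑ i, ∑ j, x i j • S i j) (∑ i', ∑ j', y i' j' • T i' j') :=
  Commute.sum_left _ _ _ fun i _ => Commute.sum_left _ _ _ fun j _ =>
    Commute.sum_right _ _ _ fun i' _ => Commute.sum_right _ _ _ fun j' _ =>
      ((h i j i' j').smul_left _).smul_right _

theorem stmt_3_general {dA dB dC : ℕ}
    (ρAB : Bip dA dB) (ρAC : Bip dA dC) (ρBC : Bip dB dC)
    (hfcAB : FullyClassical ρAB) (hfcAC : FullyClassical ρAC)
    (hfcBC : FullyClassical ρBC)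
    (ρA : Mat dA) (ρB : Mat dB) (ρC : Mat dC)
    (hA : ρA = trR ρAB) (hA' : ρA = trR ρAC)
    (hB : ρB = trL ρAB) (hB' : ρB = trR ρBC)
    (hC : ρC = trL ρAC) (hC' : ρC = trL ρBC)
    (hcomm : embAB ρAB dC * embAC ρAC dB ≠ embAC ρAC dB * embAB ρAB dC ∨
             embAB ρAB dC * embBC ρBC dA ≠ embBC ρBC dA * embAB ρAB dC ∨
             embAC ρAC dB * embBC ρBC dA ≠ embBC ρBC dA * embAC ρAC dB) :
    Degenerate ρA ∨ Degenerate ρB ∨ Degenerate ρC := by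
  obtain ⟨a, b, p, ha, hb, -, rfl⟩ := hfcAB
  obtain ⟨a₂, c, q, ha₂, hc, -, rfl⟩ := hfcAC
  obtain ⟨b₂, c₂, r, hb₂, hc₂, -, rfl⟩ := hfcBC
  by_contra! hnd
  obtain ⟨hndA, hndB, hndC⟩ := hnd
  have hcA := commute_projV_of_not_degenerate hndA ha ha₂
    (hA.trans (trR_classical a hb p)) (hA'.trans (trR_classical a₂ hc q))
  have hcB := commute_projV_of_not_degenerate hndB hb hb₂
    (hB.trans (trL_classical ha b p)) (hB'.trans (trR_classical b₂ hc₂ r))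
  have hcC := commute_projV_of_not_degenerate hndC hc hc₂
    (hC.trans (trL_classical ha₂ c q)) (hC'.trans (trL_classical hb₂ c₂ r))
  simp only [embAB_classical, embAC_classical, embBC_classical] at hcomm
  rcases hcomm with h | h | h <;> refine h (commute_sum_sum_smul _ _ fun i j i' j' => ?_).eq
  · exact commute_kronecker (hcA i i') (commute_kronecker (.one_right _) (.one_left _))
  · exact commute_kronecker (.one_right _) (commute_kronecker (hcB j i') (.one_left _))
  · exact commute_kronecker (.one_right _) (commute_kronecker (.one_left _) (hcC j j'))

/-- a nonvanishing commutator forces a degenerate one-party marginal. -/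
theorem stmt_3 {dA dB dC : ℕ}
    (ρAB : Bip dA dB) (ρAC : Bip dA dC) (ρBC : Bip dB dC)
    (hdAB : IsDensity ρAB) (hdAC : IsDensity ρAC) (hdBC : IsDensity ρBC)
    (hfcAB : FullyClassical ρAB) (hfcAC : FullyClassical ρAC)
    (hfcBC : FullyClassical ρBC)
    (ρA : Mat dA) (ρB : Mat dB) (ρC : Mat dC)
    (hA : ρA = trR ρAB) (hA' : ρA = trR ρAC)
    (hB : ρB = trL ρAB) (hB' : ρB = trR ρBC)
    (hC : ρC = trL ρAC) (hC' : ρC = trL ρBC)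
    (hcomm : embAB ρAB dC * embAC ρAC dB ≠ embAC ρAC dB * embAB ρAB dC ∨
             embAB ρAB dC * embBC ρBC dA ≠ embBC ρBC dA * embAB ρAB dC ∨
             embAC ρAC dB * embBC ρBC dA ≠ embBC ρBC dA * embAC ρAC dB) :
    Degenerate ρA ∨ Degenerate ρB ∨ Degenerate ρC :=
  stmt_3_general ρAB ρAC ρBC hfcAB hfcAC hfcBC ρA ρB ρC hA hA' hB hB' hC hC' hcomm
end QMarginal
end

section
/- Let ρ_AB, ρ_AC, ρ_BC be fully classical bipartite states with consistent single-party marginals. If some commutator among [ρ_AB ⊗ I_C, ρ_AC ⊗ I_B], [ρ_AB ⊗ I_C, ρ_BC ⊗ I_A], [ρ_AC ⊗ I_B, ρ_BC ⊗ I_A] is nonzero, then there exists no fully classical tripartite density matrix σ_ABC = Σ_{ijk} f_{ijk}|a_i b_j c_k⟩⟨a_i b_j c_k| (for orthonormal bases {|a_i⟩},{|b_j⟩},{|c_k⟩}) whose three bipartite reductions equal ρ_AB, ρ_AC, ρ_BC. -/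
/-! A state diagonal in a product basis `a i ⊗ b j ⊗ c k` with weights `f` has reductions which,
tensored back with an identity, are again diagonal in that same basis (with the marginals of `f`
as weights): the identity on the traced-out factor is resummed over its basis vectors. Matrices
diagonal in a common orthonormal basis commute, so all three commutators vanish. -/

open Matrix BigOperators
open scoped Kronecker ComplexOrder

namespace QMarginal

section

variable {ι κ : Type*} [Fintype κ] [DecidableEq ι]

def OrthonormalFamily (e : ι → κ → ℂ) : Prop :=
  ∀ s t, (∑ m, star (e s m) * e t m) = if s = t then (1 : ℂ) else 0

namespace OrthonormalFamily

variable {e : ι → κ → ℂ}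

lemma projV_mul_projV (he : OrthonormalFamily e) (s t : ι) :
    projV (e s) * projV (e t) = if s = t then projV (e s) else 0 := by
  ext i j
  have hmul : (projV (e s) * projV (e t)) i j =
      (∑ m, star (e s m) * e t m) * (e s i * star (e t j)) := by
    rw [Matrix.mul_apply, Finset.sum_mul]
    exact Finset.sum_congr rfl fun m _ => by simp only [projV]; ring
  rw [hmul, he]
  split_ifs with h
  · subst h; simp [projV]
  · simp

lemma sum_smul_projV_mul_sum_smul_projV [Fintype ι] (he : OrthonormalFamily e)
    (g h : ι → ℝ) :
    (∑ s, g s • projV (e s)) * (∑ t, h t • projV (e t)) =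
      ∑ s, (g s * h s) • projV (e s) := by
  simp only [Finset.sum_mul, Finset.mul_sum, smul_mul_smul_comm, he.projV_mul_projV,
    smul_ite, smul_zero, Finset.sum_ite_eq', Finset.mem_univ, if_true]

lemma commute_sum_smul_projV [Fintype ι] (he : OrthonormalFamily e) (g h : ι → ℝ) :
    Commute (∑ s, g s • projV (e s)) (∑ t, h t • projV (e t)) := by
  simp only [Commute, SemiconjBy, he.sum_smul_projV_mul_sum_smul_projV, mul_comm]

end OrthonormalFamily

end

namespace ONB

variable {n : ℕ} {a : Fin n → Fin n → ℂ}

lemma sum_star_mul_self (ha : ONB a) (i : Fin n) : ∑ m, star (a i m) * a i m = 1 := by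
  simpa using ha i i

/-- The rows of `of a` are orthonormal, so `of a` is unitary and its columns are orthonormal too. -/
lemma sum_mul_star (ha : ONB a) (m m' : Fin n) :
    ∑ i, a i m * star (a i m') = if m = m' then 1 else 0 := by
  have hrows : of a * (of a)ᴴ = 1 := by
    ext i j
    simpa only [mul_apply, conjTranspose_apply, of_apply, one_apply, mul_comm, eq_comm]
      using ha j i
  have hcols : ((of a)ᴴ * of a) m' m = (1 : Matrix _ _ ℂ) m' m := by
    rw [mul_eq_one_comm.mp hrows]
  simp only [mul_apply, conjTranspose_apply, of_apply, one_apply] at hcols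
  calc ∑ i, a i m * star (a i m') = ∑ i, star (a i m') * a i m :=
        Finset.sum_congr rfl fun _ _ => mul_comm _ _
    _ = if m = m' then 1 else 0 := by rw [hcols]; simp only [@eq_comm _ m']

lemma orthonormalFamily_prod3 {dA dB dC : ℕ} {a : Fin dA → Fin dA → ℂ}
    {b : Fin dB → Fin dB → ℂ} {c : Fin dC → Fin dC → ℂ}
    (ha : ONB a) (hb : ONB b) (hc : ONB c) :
    OrthonormalFamily fun t : Fin dA × Fin dB × Fin dC =>
      prod3 (a t.1) (b t.2.1) (c t.2.2) := by
  rintro ⟨i, j, k⟩ ⟨i', j', k'⟩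
  have hfactor : ∑ m : Fin dA × Fin dB × Fin dC,
      star (prod3 (a i) (b j) (c k) m) * prod3 (a i') (b j') (c k') m =
      (∑ m, star (a i m) * a i' m) * ((∑ m, star (b j m) * b j' m) *
        (∑ m, star (c k m) * c k' m)) := by
    simp only [Fintype.sum_prod_type, prod3, star_mul']
    rw [Finset.sum_mul_sum, Finset.sum_mul_sum]
    refine Finset.sum_congr rfl fun _ _ => Finset.sum_congr rfl fun _ _ => ?_
    rw [Finset.mul_sum]
    exact Finset.sum_congr rfl fun _ _ => by ring
  rw [hfactor, ha, hb, hc]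
  simp only [Prod.mk.injEq, ite_mul, one_mul, zero_mul, ite_and]

end ONB

section Marginals

variable {dA dB dC : ℕ} {α : Type*}

lemma trC_sum (s : Finset α) (M : α → Tri dA dB dC) :
    trC (∑ x ∈ s, M x) = ∑ x ∈ s, trC (M x) := by
  ext; simp only [trC, Matrix.sum_apply]; exact Finset.sum_comm

lemma trB_sum (s : Finset α) (M : α → Tri dA dB dC) :
    trB (∑ x ∈ s, M x) = ∑ x ∈ s, trB (M x) := by
  ext; simp only [trB, Matrix.sum_apply]; exact Finset.sum_comm

lemma trA_sum (s : Finset α) (M : α → Tri dA dB dC) :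
    trA (∑ x ∈ s, M x) = ∑ x ∈ s, trA (M x) := by
  ext; simp only [trA, Matrix.sum_apply]; exact Finset.sum_comm

lemma trC_smul (r : ℝ) (M : Tri dA dB dC) : trC (r • M) = r • trC M := by
  ext; simp only [trC, Matrix.smul_apply, Finset.smul_sum]

lemma trB_smul (r : ℝ) (M : Tri dA dB dC) : trB (r • M) = r • trB M := by
  ext; simp only [trB, Matrix.smul_apply, Finset.smul_sum]

lemma trA_smul (r : ℝ) (M : Tri dA dB dC) : trA (r • M) = r • trA M := by
  ext; simp only [trA, Matrix.smul_apply, Finset.smul_sum]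

lemma embAB_sum (s : Finset α) (M : α → Bip dA dB) :
    embAB (∑ x ∈ s, M x) dC = ∑ x ∈ s, embAB (M x) dC := by
  ext; simp only [embAB, Matrix.sum_apply, Finset.sum_mul]

lemma embAC_sum (s : Finset α) (M : α → Bip dA dC) :
    embAC (∑ x ∈ s, M x) dB = ∑ x ∈ s, embAC (M x) dB := by
  ext; simp only [embAC, Matrix.sum_apply, Finset.sum_mul]

lemma embBC_sum (s : Finset α) (M : α → Bip dB dC) :
    embBC (∑ x ∈ s, M x) dA = ∑ x ∈ s, embBC (M x) dA := by
  ext; simp only [embBC, Matrix.sum_apply, Finset.sum_mul]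

lemma embAB_smul (r : ℝ) (M : Bip dA dB) : embAB (r • M) dC = r • embAB M dC := by
  ext; simp only [embAB, Matrix.smul_apply, smul_mul_assoc]

lemma embAC_smul (r : ℝ) (M : Bip dA dC) : embAC (r • M) dB = r • embAC M dB := by
  ext; simp only [embAC, Matrix.smul_apply, smul_mul_assoc]

lemma embBC_smul (r : ℝ) (M : Bip dB dC) : embBC (r • M) dA = r • embBC M dA := by
  ext; simp only [embBC, Matrix.smul_apply, smul_mul_assoc]

lemma trC_projV_prod3 (u : Fin dA → ℂ) (v : Fin dB → ℂ) {w : Fin dC → ℂ}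
    (hw : ∑ m, star (w m) * w m = 1) : trC (projV (prod3 u v w)) = projV (prod2 u v) := by
  ext x y
  simp only [trC, projV, prod3, prod2, star_mul']
  rw [← mul_one (u x.1 * v x.2 * _), ← hw, Finset.mul_sum]
  exact Finset.sum_congr rfl fun _ _ => by ring

lemma trB_projV_prod3 (u : Fin dA → ℂ) {v : Fin dB → ℂ} (w : Fin dC → ℂ)
    (hv : ∑ m, star (v m) * v m = 1) : trB (projV (prod3 u v w)) = projV (prod2 u w) := by
  ext x y
  simp only [trB, projV, prod3, prod2, star_mul']
  rw [← mul_one (u x.1 * w x.2 * _), ← hv, Finset.mul_sum]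
  exact Finset.sum_congr rfl fun _ _ => by ring

lemma trA_projV_prod3 {u : Fin dA → ℂ} (v : Fin dB → ℂ) (w : Fin dC → ℂ)
    (hu : ∑ m, star (u m) * u m = 1) : trA (projV (prod3 u v w)) = projV (prod2 v w) := by
  ext x y
  simp only [trA, projV, prod3, prod2, star_mul']
  rw [← mul_one (v x.1 * w x.2 * _), ← hu, Finset.mul_sum]
  exact Finset.sum_congr rfl fun _ _ => by ring

lemma embAB_projV_prod2 (u : Fin dA → ℂ) (v : Fin dB → ℂ) {c : Fin dC → Fin dC → ℂ}
    (hc : ONB c) : embAB (projV (prod2 u v)) dC = ∑ k, projV (prod3 u v (c k)) := by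
  ext x y
  simp only [embAB, projV, prod2, prod3, Matrix.sum_apply, ← hc.sum_mul_star, Finset.mul_sum,
    star_mul']
  exact Finset.sum_congr rfl fun _ _ => by ring

lemma embAC_projV_prod2 (u : Fin dA → ℂ) (w : Fin dC → ℂ) {b : Fin dB → Fin dB → ℂ}
    (hb : ONB b) : embAC (projV (prod2 u w)) dB = ∑ j, projV (prod3 u (b j) w) := by
  ext x y
  simp only [embAC, projV, prod2, prod3, Matrix.sum_apply, ← hb.sum_mul_star, Finset.mul_sum,
    star_mul']
  exact Finset.sum_congr rfl fun _ _ => by ring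

lemma embBC_projV_prod2 (v : Fin dB → ℂ) (w : Fin dC → ℂ) {a : Fin dA → Fin dA → ℂ}
    (ha : ONB a) : embBC (projV (prod2 v w)) dA = ∑ i, projV (prod3 (a i) v w) := by
  ext x y
  simp only [embBC, projV, prod2, prod3, Matrix.sum_apply, ← ha.sum_mul_star, Finset.mul_sum,
    star_mul']
  exact Finset.sum_congr rfl fun _ _ => by ring

end Marginals

section DiagTri

variable {dA dB dC : ℕ} {a : Fin dA → Fin dA → ℂ} {b : Fin dB → Fin dB → ℂ}
  {c : Fin dC → Fin dC → ℂ}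

noncomputable def diagTri (a : Fin dA → Fin dA → ℂ) (b : Fin dB → Fin dB → ℂ)
    (c : Fin dC → Fin dC → ℂ) (f : Fin dA → Fin dB → Fin dC → ℝ) : Tri dA dB dC :=
  ∑ i, ∑ j, ∑ k, f i j k • projV (prod3 (a i) (b j) (c k))

lemma commute_diagTri (ha : ONB a) (hb : ONB b) (hc : ONB c)
    (g h : Fin dA → Fin dB → Fin dC → ℝ) :
    Commute (diagTri a b c g) (diagTri a b c h) := by
  simp only [diagTri, ← Fintype.sum_prod_type']
  exact (ha.orthonormalFamily_prod3 hb hc).commute_sum_smul_projV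
    (fun t => g t.1 t.2.1 t.2.2) (fun t => h t.1 t.2.1 t.2.2)

lemma embAB_trC_diagTri (hc : ONB c) (f : Fin dA → Fin dB → Fin dC → ℝ) :
    embAB (trC (diagTri a b c f)) dC = diagTri a b c fun i j _ => ∑ k, f i j k := by
  simp only [diagTri, trC_sum, trC_smul, trC_projV_prod3 _ _ (hc.sum_star_mul_self _),
    embAB_sum, embAB_smul, embAB_projV_prod2 _ _ hc, Finset.smul_sum, Finset.sum_smul]
  exact Finset.sum_congr rfl fun _ _ => Finset.sum_congr rfl fun _ _ => Finset.sum_comm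

lemma embAC_trB_diagTri (hb : ONB b) (f : Fin dA → Fin dB → Fin dC → ℝ) :
    embAC (trB (diagTri a b c f)) dB = diagTri a b c fun i _ k => ∑ j, f i j k := by
  simp only [diagTri, trB_sum, trB_smul, trB_projV_prod3 _ _ (hb.sum_star_mul_self _),
    embAC_sum, embAC_smul, embAC_projV_prod2 _ _ hb, Finset.smul_sum, Finset.sum_smul]
  refine Finset.sum_congr rfl fun _ _ => ?_
  rw [Finset.sum_comm_cycle]
  exact Finset.sum_congr rfl fun _ _ => Finset.sum_comm

lemma embBC_trA_diagTri (ha : ONB a) (f : Fin dA → Fin dB → Fin dC → ℝ) :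
    embBC (trA (diagTri a b c f)) dA = diagTri a b c fun _ j k => ∑ i, f i j k := by
  simp only [diagTri, trA_sum, trA_smul, trA_projV_prod3 _ _ (ha.sum_star_mul_self _),
    embBC_sum, embBC_smul, embBC_projV_prod2 _ _ ha, Finset.smul_sum, Finset.sum_smul]
  refine (Finset.sum_congr rfl fun _ _ => Finset.sum_comm_cycle).trans ?_
  rw [Finset.sum_comm]
  exact Finset.sum_congr rfl fun _ _ => Finset.sum_comm_cycle.symm

end DiagTri

theorem stmt_4_general {dA dB dC : ℕ}
    (ρAB : Bip dA dB) (ρAC : Bip dA dC) (ρBC : Bip dB dC)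
    (hcomm : embAB ρAB dC * embAC ρAC dB ≠ embAC ρAC dB * embAB ρAB dC ∨
             embAB ρAB dC * embBC ρBC dA ≠ embBC ρBC dA * embAB ρAB dC ∨
             embAC ρAC dB * embBC ρBC dA ≠ embBC ρBC dA * embAC ρAC dB) :
    ¬ ∃ σ : Tri dA dB dC, IsDensity σ ∧ FullyClassicalTri σ ∧
      trC σ = ρAB ∧ trB σ = ρAC ∧ trA σ = ρBC := by
  rintro ⟨σ, -, ⟨a, b, c, f, ha, hb, hc, -, hσ⟩, rfl, rfl, rfl⟩
  obtain rfl : σ = diagTri a b c f := hσ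
  rw [embAB_trC_diagTri hc, embAC_trB_diagTri hb, embBC_trA_diagTri ha] at hcomm
  rcases hcomm with h | h | h <;> exact h (commute_diagTri ha hb hc _ _).eq

/-- a nonvanishing commutator excludes compatibility with any fully
classical tripartite state. -/
theorem stmt_4 {dA dB dC : ℕ}
    (ρAB : Bip dA dB) (ρAC : Bip dA dC) (ρBC : Bip dB dC)
    (hdAB : IsDensity ρAB) (hdAC : IsDensity ρAC) (hdBC : IsDensity ρBC)
    (hfcAB : FullyClassical ρAB) (hfcAC : FullyClassical ρAC)
    (hfcBC : FullyClassical ρBC)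
    (hmA : trR ρAB = trR ρAC) (hmB : trL ρAB = trR ρBC)
    (hmC : trL ρAC = trL ρBC)
    (hcomm : embAB ρAB dC * embAC ρAC dB ≠ embAC ρAC dB * embAB ρAB dC ∨
             embAB ρAB dC * embBC ρBC dA ≠ embBC ρBC dA * embAB ρAB dC ∨
             embAC ρAC dB * embBC ρBC dA ≠ embBC ρBC dA * embAC ρAC dB) :
    ¬ ∃ σ : Tri dA dB dC, IsDensity σ ∧ FullyClassicalTri σ ∧
      trC σ = ρAB ∧ trB σ = ρAC ∧ trA σ = ρBC :=
  stmt_4_general ρAB ρAC ρBC hcomm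
end QMarginal
end

section
/- Consider the three-qubit operator ρ_ABC(q) = (1/8)(I⊗I⊗I + q·I⊗σ_1⊗σ_1 + q·σ_2⊗I⊗σ_2 + q·σ_3⊗σ_3⊗I). Then ρ_ABC(q) is positive semidefinite if and only if |q| ≤ 1/√3. -/
open Matrix BigOperators
open scoped Kronecker ComplexOrder

namespace QMarginal

/-- the Pauli matrices -/
noncomputable def pauli : Fin 3 → Mat 2 :=
  ![!![0, 1; 1, 0], !![0, -Complex.I; Complex.I, 0], !![1, 0; 0, -1]]
/-- the three-qubit family ρ_ABC(q) of Example 1 -/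
noncomputable def rhoQ (q : ℝ) : Tri 2 2 2 :=
  (1/8 : ℝ) • ((1 : Tri 2 2 2)
    + q • ((1 : Mat 2) ⊗ₖ (pauli 0 ⊗ₖ pauli 0))
    + q • (pauli 1 ⊗ₖ ((1 : Mat 2) ⊗ₖ pauli 1))
    + q • (pauli 2 ⊗ₖ (pauli 2 ⊗ₖ (1 : Mat 2))))

/-!
The operator is `ρ(q) = (1 + q S) / 8`, where `S = X + Y + Z` is a sum of three Hermitian
involutions (tensor products of Pauli matrices) that pairwise anticommute, so `S² = 3`. Hence the
eigenvalues of `q S` lie in `{√3 |q|, -√3 |q|}`, both occur because `S` is traceless, and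
`1 + q S ≥ 0` exactly when `√3 |q| ≤ 1`.
-/

end QMarginal

theorem mul_self_add_add_eq_three_of_anticomm {R : Type*} [Ring R] {X Y Z : R}
    (hX : X * X = 1) (hY : Y * Y = 1) (hZ : Z * Z = 1)
    (hXY : X * Y + Y * X = 0) (hXZ : X * Z + Z * X = 0) (hYZ : Y * Z + Z * Y = 0) :
    (X + Y + Z) * (X + Y + Z) = 3 := by
  calc (X + Y + Z) * (X + Y + Z)
      = X * X + Y * Y + Z * Z + (X * Y + Y * X) + (X * Z + Z * X) + (Y * Z + Z * Y) := by
        noncomm_ring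
    _ = 3 := by rw [hX, hY, hZ, hXY, hXZ, hYZ]; norm_num

namespace Matrix

theorem IsHermitian.kronecker {m n R : Type*} [CommRing R] [StarRing R]
    {A : Matrix m m R} {B : Matrix n n R} (hA : A.IsHermitian) (hB : B.IsHermitian) :
    (A ⊗ₖ B).IsHermitian := by
  rw [IsHermitian, conjTranspose_kronecker, hA.eq, hB.eq]

theorem posSemidef_real_smul_iff {n 𝕜 : Type*} [RCLike 𝕜] {A : Matrix n n 𝕜} {c : ℝ}
    (hc : 0 < c) : (c • A).PosSemidef ↔ A.PosSemidef :=
  ⟨fun h => by simpa [smul_smul, hc.ne'] using h.smul (inv_nonneg.2 hc.le),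
    fun h => h.smul hc.le⟩

variable {n 𝕜 : Type*} [Fintype n] [DecidableEq n] [RCLike 𝕜] {P : Matrix n n 𝕜} {s a : ℝ}

theorem trace_smul_one_add_of_trace_eq_zero (htr : P.trace = 0) (r : ℝ) :
    (r • 1 + P).trace = ((r * Fintype.card n : ℝ) : 𝕜) := by
  rw [trace_add, trace_smul, trace_one, htr, add_zero, RCLike.real_smul_eq_coe_mul]
  push_cast
  ring

theorem posSemidef_smul_one_add_self (hP : P.IsHermitian) (hP2 : P * P = s ^ 2 • 1)
    (hs : 0 ≤ s) : (s • 1 + P).PosSemidef := by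
  obtain rfl | hs := hs.eq_or_lt
  · have hP0 : P = 0 := by
      rw [← conjTranspose_mul_self_eq_zero, hP.eq, hP2]
      simp
    simpa [hP0] using PosSemidef.zero
  · have hsq : (s • 1 + P)ᴴ * (s • 1 + P) = (2 * s) • (s • 1 + P) := by
      rw [conjTranspose_add, conjTranspose_smul, conjTranspose_one, hP.eq, star_trivial]
      simp only [add_mul, mul_add, Matrix.smul_mul, Matrix.mul_smul, one_mul, mul_one, hP2,
        smul_smul]
      module
    have hself : s • 1 + P = (2 * s)⁻¹ • ((s • 1 + P)ᴴ * (s • 1 + P)) := by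
      rw [hsq, smul_smul, inv_mul_cancel₀ (by positivity), one_smul]
    rw [hself]
    exact (posSemidef_conjTranspose_mul_self _).smul (by positivity)

theorem posSemidef_smul_one_add_of_le (hP : P.IsHermitian) (hP2 : P * P = s ^ 2 • 1)
    (hs : 0 ≤ s) (hsa : s ≤ a) : (a • 1 + P).PosSemidef := by
  have hsplit : a • 1 + P = (a - s) • 1 + (s • 1 + P) := by module
  rw [hsplit]
  exact (PosSemidef.one.smul (sub_nonneg.2 hsa)).add (posSemidef_smul_one_add_self hP hP2 hs)

theorem le_of_posSemidef_smul_one_add [Nonempty n] (hP : P.IsHermitian)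
    (hP2 : P * P = s ^ 2 • 1) (htr : P.trace = 0) (h : (a • 1 + P).PosSemidef) : s ≤ a := by
  have hn : (0 : ℝ) < Fintype.card n := by exact_mod_cast Fintype.card_pos
  have ha : 0 ≤ a := by
    have := h.trace_nonneg
    rw [trace_smul_one_add_of_trace_eq_zero htr, RCLike.ofReal_nonneg] at this
    exact (mul_nonneg_iff_of_pos_right hn).1 this
  -- `(s - P)² = 2s (s - P)`: conjugating by `s - P` keeps only the `-s`-eigenspace of `P`.
  have hconj : (s • 1 - P)ᴴ * (a • 1 + P) * (s • 1 - P)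
      = (2 * s ^ 2 * (a - s)) • 1 + (2 * s * (s - a)) • P := by
    rw [conjTranspose_sub, conjTranspose_smul, conjTranspose_one, hP.eq, star_trivial]
    simp only [sub_mul, mul_sub, add_mul, mul_add, Matrix.smul_mul, Matrix.mul_smul, one_mul,
      mul_one, hP2, smul_smul, ← mul_assoc]
    module
  have hb : 0 ≤ 2 * s ^ 2 * (a - s) * Fintype.card n := by
    have := (h.conjTranspose_mul_mul_same (s • 1 - P)).trace_nonneg
    rwa [hconj, trace_smul_one_add_of_trace_eq_zero (by rw [trace_smul, htr, smul_zero]),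
      RCLike.ofReal_nonneg] at this
  have hb' : 0 ≤ s ^ 2 * (a - s) := by nlinarith
  by_contra! hlt
  nlinarith [mul_pos (pow_pos (ha.trans_lt hlt) 2) (sub_pos.2 hlt)]

theorem posSemidef_smul_one_add_iff [Nonempty n] (hP : P.IsHermitian)
    (hP2 : P * P = s ^ 2 • 1) (hs : 0 ≤ s) (htr : P.trace = 0) :
    (a • 1 + P).PosSemidef ↔ s ≤ a :=
  ⟨le_of_posSemidef_smul_one_add hP hP2 htr, posSemidef_smul_one_add_of_le hP hP2 hs⟩

end Matrix

namespace QMarginal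

theorem pauli_mul_self (i : Fin 3) : pauli i * pauli i = 1 := by
  fin_cases i <;> simp [pauli, one_fin_two]

theorem pauli_mul_add_mul_swap {i j : Fin 3} (h : i ≠ j) :
    pauli i * pauli j + pauli j * pauli i = 0 := by
  fin_cases i <;> fin_cases j <;> simp_all [pauli, ← Matrix.ext_iff, Fin.forall_fin_two]

theorem isHermitian_pauli (i : Fin 3) : (pauli i).IsHermitian := by
  fin_cases i <;> ext a b <;> fin_cases a <;> fin_cases b <;> simp [pauli]

theorem trace_pauli (i : Fin 3) : (pauli i).trace = 0 := by
  fin_cases i <;> simp [pauli, trace_fin_two]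

noncomputable def pauliSum : Tri 2 2 2 :=
  (1 : Mat 2) ⊗ₖ (pauli 0 ⊗ₖ pauli 0) + pauli 1 ⊗ₖ ((1 : Mat 2) ⊗ₖ pauli 1)
    + pauli 2 ⊗ₖ (pauli 2 ⊗ₖ (1 : Mat 2))

theorem rhoQ_eq (q : ℝ) : rhoQ q = (1 / 8 : ℝ) • (1 + q • pauliSum) := by
  rw [rhoQ, pauliSum]
  module

theorem pauliSum_mul_self : pauliSum * pauliSum = 3 := by
  rw [pauliSum]
  apply mul_self_add_add_eq_three_of_anticomm <;>
    simp [← mul_kronecker_mul, pauli_mul_self, ← kronecker_add, ← add_kronecker,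
      pauli_mul_add_mul_swap]

theorem smul_pauliSum_mul_self (q : ℝ) :
    (q • pauliSum) * (q • pauliSum) = (Real.sqrt 3 * |q|) ^ 2 • (1 : Tri 2 2 2) := by
  have h3 : (3 : Tri 2 2 2) = (3 : ℝ) • 1 := by
    rw [ofNat_smul_eq_nsmul ℝ 3, nsmul_one, Nat.cast_ofNat]
  rw [Matrix.smul_mul, Matrix.mul_smul, pauliSum_mul_self, h3, smul_smul, smul_smul, mul_pow,
    Real.sq_sqrt zero_le_three, sq_abs]
  congr 1
  ring

theorem isHermitian_pauliSum : pauliSum.IsHermitian :=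
  let h := isHermitian_pauli
  ((isHermitian_one.kronecker ((h 0).kronecker (h 0))).add
    ((h 1).kronecker (isHermitian_one.kronecker (h 1)))).add
    ((h 2).kronecker ((h 2).kronecker isHermitian_one))

theorem trace_pauliSum : pauliSum.trace = 0 := by
  simp [pauliSum, trace_kronecker, trace_pauli]

/-- ρ_ABC(q) is positive semidefinite iff |q| ≤ 1/√3. -/
theorem stmt_11 (q : ℝ) :
    (rhoQ q).PosSemidef ↔ |q| ≤ 1 / Real.sqrt 3 := by
  have hS : (q • pauliSum).IsHermitian := isHermitian_pauliSum.smul (IsSelfAdjoint.all q)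
  have htr : (q • pauliSum).trace = 0 := by rw [trace_smul, trace_pauliSum, smul_zero]
  rw [rhoQ_eq, posSemidef_real_smul_iff (by norm_num), ← one_smul ℝ (1 : Tri 2 2 2),
    posSemidef_smul_one_add_iff hS (smul_pauliSum_mul_self q) (by positivity) htr,
    le_div_iff₀ (by positivity), mul_comm]
end QMarginal
end

section
/- The state σ_ABC = (2/3)|ξ⟩⟨ξ| + (1/3)|111⟩⟨111| on (C^2)^{⊗3}, with |ξ⟩ = (1/2)|010⟩ + (1/2)|100⟩ + (1/√2)|001⟩, has bipartite reductions σ_AB = (1/3)|Φ^+⟩⟨Φ^+| + (1/3)|00⟩⟨00| + (1/3)|11⟩⟨11| with |Φ^+⟩ = (|01⟩+|10⟩)/√2, and σ_BC = σ_AC = (1/2)|ζ⟩⟨ζ| + (1/6)|00⟩⟨00| + (1/3)|11⟩⟨11| with |ζ⟩ = √(2/3)|01⟩ + √(1/3)|10⟩. Moreover, each of σ_AB, σ_BC, σ_AC has positive semidefinite partial transpose. -/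
open Matrix BigOperators
open scoped Kronecker ComplexOrder

namespace QMarginal

/-- partial transpose on the first factor of a bipartite matrix -/
def ptFst {m n : ℕ} (ρ : Bip m n) : Bip m n :=
  fun x y => ρ (y.1, x.2) (x.1, y.2)

noncomputable def ξ : Fin 2 × Fin 2 × Fin 2 → ℂ := fun x =>
  if x = (0, 1, 0) then 1/2 else if x = (1, 0, 0) then 1/2
  else if x = (0, 0, 1) then (((Real.sqrt 2)⁻¹ : ℝ) : ℂ) else 0

noncomputable def σABC : Tri 2 2 2 :=
  (2/3 : ℝ) • projV ξ
    + (1/3 : ℝ) • projV (fun x : Fin 2 × Fin 2 × Fin 2 => if x = (1, 1, 1) then 1 else 0)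

noncomputable def Φplus : Fin 2 × Fin 2 → ℂ := fun x =>
  if x = (0, 1) ∨ x = (1, 0) then (((Real.sqrt 2)⁻¹ : ℝ) : ℂ) else 0

noncomputable def ζ : Fin 2 × Fin 2 → ℂ := fun x =>
  if x = (0, 1) then ((Real.sqrt (2/3) : ℝ) : ℂ)
  else if x = (1, 0) then ((Real.sqrt (1/3) : ℝ) : ℂ) else 0

def e00 : Fin 2 × Fin 2 → ℂ := fun x => if x = (0, 0) then 1 else 0
def e11 : Fin 2 × Fin 2 → ℂ := fun x => if x = (1, 1) then 1 else 0

/-! The state is invariant under exchanging `A` and `B`, whence `σ_AC = σ_BC`; the reductions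
themselves are entrywise computations over `ℚ(√2, √3)`. The partial transpose moves the coherence
between `|01⟩` and `|10⟩` onto `|00⟩` and `|11⟩`, and the results are nonnegative combinations of
rank-one projectors `P v = |v⟩⟨v|`:
`σ_ABᵀᴬ = (1/6) P(|00⟩ + |11⟩) + (1/6) 1` and
`σ_ACᵀᴬ = (1/6) P(|00⟩ + √2 |11⟩) + (1/3) P|01⟩ + (1/6) P|10⟩`. -/

lemma posSemidef_projV {ι : Type*} [Fintype ι] (v : ι → ℂ) : (projV v).PosSemidef :=
  posSemidef_vecMulVec_self_star v

lemma ofReal_sqrt_two_mul_self : (√2 : ℂ) * √2 = 2 := by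
  exact_mod_cast Real.mul_self_sqrt zero_le_two

lemma ofReal_sqrt_three_mul_self : (√3 : ℂ) * √3 = 3 := by
  exact_mod_cast Real.mul_self_sqrt zero_le_three

def e01 : Fin 2 × Fin 2 → ℂ := fun x => if x = (0, 1) then 1 else 0
def e10 : Fin 2 × Fin 2 → ℂ := fun x => if x = (1, 0) then 1 else 0

lemma trC_σABC :
    trC σABC = (1/3 : ℝ) • projV Φplus + (1/3 : ℝ) • projV e00 + (1/3 : ℝ) • projV e11 := by
  ext ⟨i, j⟩ ⟨k, l⟩
  fin_cases i <;> fin_cases j <;> fin_cases k <;> fin_cases l <;>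
    simp [trC, σABC, projV, ξ, Φplus, e00, e11, Prod.ext_iff, map_ofNat] <;>
    grind [ofReal_sqrt_two_mul_self]

lemma trA_σABC :
    trA σABC = (1/2 : ℝ) • projV ζ + (1/6 : ℝ) • projV e00 + (1/3 : ℝ) • projV e11 := by
  ext ⟨i, j⟩ ⟨k, l⟩
  fin_cases i <;> fin_cases j <;> fin_cases k <;> fin_cases l <;>
    simp [trA, σABC, projV, ξ, ζ, e00, e11, Prod.ext_iff, map_ofNat] <;>
    grind [ofReal_sqrt_two_mul_self, ofReal_sqrt_three_mul_self]

lemma trB_σABC : trB σABC = trA σABC := by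
  ext ⟨i, j⟩ ⟨k, l⟩
  fin_cases i <;> fin_cases j <;> fin_cases k <;> fin_cases l <;>
    simp [trA, trB, σABC, projV, ξ, Prod.ext_iff]

lemma ptFst_trC_σABC : ptFst (trC σABC) = (1/6 : ℝ) • projV (e00 + e11) + (1/6 : ℝ) • 1 := by
  rw [trC_σABC]
  ext ⟨i, j⟩ ⟨k, l⟩
  fin_cases i <;> fin_cases j <;> fin_cases k <;> fin_cases l <;>
    simp [ptFst, projV, Φplus, e00, e11, Prod.ext_iff, one_apply] <;>
    grind [ofReal_sqrt_two_mul_self]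

lemma ptFst_trA_σABC :
    ptFst (trA σABC) = (1/6 : ℝ) • projV (e00 + (√2 : ℂ) • e11)
      + (1/3 : ℝ) • projV e01 + (1/6 : ℝ) • projV e10 := by
  rw [trA_σABC]
  ext ⟨i, j⟩ ⟨k, l⟩
  fin_cases i <;> fin_cases j <;> fin_cases k <;> fin_cases l <;>
    simp [ptFst, projV, ζ, e00, e01, e10, e11, Prod.ext_iff] <;>
    grind [ofReal_sqrt_two_mul_self, ofReal_sqrt_three_mul_self]

lemma posSemidef_ptFst_trC_σABC : (ptFst (trC σABC)).PosSemidef := by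
  rw [ptFst_trC_σABC]
  exact ((posSemidef_projV _).smul (by norm_num)).add (PosSemidef.one.smul (by norm_num))

lemma posSemidef_ptFst_trA_σABC : (ptFst (trA σABC)).PosSemidef := by
  rw [ptFst_trA_σABC]
  exact (((posSemidef_projV _).smul (by norm_num)).add
    ((posSemidef_projV _).smul (by norm_num))).add ((posSemidef_projV _).smul (by norm_num))

/-- the bipartite reductions of σ_ABC and their PPT property. -/
theorem stmt_17 :
    trC σABC = (1/3 : ℝ) • projV Φplus + (1/3 : ℝ) • projV e00 + (1/3 : ℝ) • projV e11 ∧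
    trA σABC = (1/2 : ℝ) • projV ζ + (1/6 : ℝ) • projV e00 + (1/3 : ℝ) • projV e11 ∧
    trB σABC = trA σABC ∧
    (ptFst (trC σABC)).PosSemidef ∧ (ptFst (trA σABC)).PosSemidef ∧
    (ptFst (trB σABC)).PosSemidef :=
  ⟨trC_σABC, trA_σABC, trB_σABC, posSemidef_ptFst_trC_σABC, posSemidef_ptFst_trA_σABC,
    trB_σABC ▸ posSemidef_ptFst_trA_σABC⟩
end QMarginal
end

section
/- Suppose the bipartite states ρ_AB, ρ_BC, ρ_AC are compatible with exactly one tripartite state ρ_ABC (unique compatibility), and let σ_ABC be a tripartite state with Range(σ_ABC) ⊆ Range(ρ_ABC). Then σ_ABC is the unique tripartite state whose bipartite reductions are σ_AB, σ_BC, σ_AC. -/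
/-
Range(σ) ⊆ Range(ρ) gives ker ρ ⊆ ker σ, and then ε σ ≤ ρ for some ε > 0: in an eigenbasis of
`ρ`, `σ` lives on the support of `ρ`, where `ρ` is at least its smallest nonzero eigenvalue.
If `τ` is a state with the same two-body marginals as `σ`, then `ρ + ε (τ - σ)` is a state with
the same marginals as `ρ`, hence equals `ρ`, and so `τ = σ`.
-/

open Matrix BigOperators
open scoped Kronecker ComplexOrder

open scoped MatrixOrder

lemma exists_pos_le_of_ne_zero {n : Type*} [Finite n] {d : n → ℝ} (hd : 0 ≤ d) :
    ∃ c : ℝ, 0 < c ∧ ∀ i, d i ≠ 0 → c ≤ d i := by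
  by_cases h : ∃ i, d i ≠ 0
  · have : Nonempty {i // d i ≠ 0} := let ⟨i, hi⟩ := h; ⟨⟨i, hi⟩⟩
    obtain ⟨⟨i₀, hi₀⟩, hmin⟩ := Finite.exists_min fun i : {i // d i ≠ 0} => d i
    exact ⟨d i₀, (hd i₀).lt_of_ne' hi₀, fun i hi => hmin ⟨i, hi⟩⟩
  · simp only [not_exists, not_not] at h
    exact ⟨1, one_pos, fun i hi => (hi (h i)).elim⟩

namespace Matrix

variable {𝕜 n : Type*} [RCLike 𝕜] [Fintype n]

lemma IsHermitian.ker_le_of_range_le {ρ σ : Matrix n n 𝕜} (hρ : ρ.IsHermitian)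
    (hσ : σ.IsHermitian) (h : LinearMap.range σ.mulVecLin ≤ LinearMap.range ρ.mulVecLin) :
    LinearMap.ker ρ.mulVecLin ≤ LinearMap.ker σ.mulVecLin := by
  intro x hx
  rw [LinearMap.mem_ker, mulVecLin_apply] at hx ⊢
  obtain ⟨z, hz⟩ := h (LinearMap.mem_range_self σ.mulVecLin (σ *ᵥ x))
  rw [mulVecLin_apply, mulVecLin_apply] at hz
  -- `‖σ x‖² = ⟪x, σ (σ x)⟫ = ⟪x, ρ z⟫ = ⟪ρ x, z⟫ = 0`
  have : star (σ *ᵥ x) ⬝ᵥ σ *ᵥ x = 0 := by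
    rw [star_mulVec, ← dotProduct_mulVec, hσ.eq, ← hz, dotProduct_mulVec, ← hρ.eq,
      ← star_mulVec, hx, star_zero, zero_dotProduct]
  exact dotProduct_star_self_eq_zero.mp this

variable [DecidableEq n]

lemma IsHermitian.exists_le_smul_one {A : Matrix n n 𝕜} (hA : A.IsHermitian) :
    ∃ t : ℝ, 0 < t ∧ A ≤ t • (1 : Matrix n n 𝕜) := by
  refine ⟨1 + ∑ i, |hA.eigenvalues i|, by positivity, ?_⟩
  rw [← Algebra.algebraMap_eq_smul_one]
  refine le_algebraMap_of_spectrum_le (fun x hx => ?_) hA.isSelfAdjoint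
  obtain ⟨i, rfl⟩ := hA.spectrum_real_eq_range_eigenvalues ▸ hx
  calc hA.eigenvalues i ≤ |hA.eigenvalues i| := le_abs_self _
    _ ≤ ∑ j, |hA.eigenvalues j| :=
      Finset.single_le_sum (f := fun j => |hA.eigenvalues j|) (fun j _ => abs_nonneg _)
        (Finset.mem_univ i)
    _ ≤ 1 + ∑ j, |hA.eigenvalues j| := le_add_of_nonneg_left zero_le_one

lemma IsHermitian.exists_pos_smul_le_diagonal {d : n → ℝ} (hd : 0 ≤ d) {S : Matrix n n 𝕜}
    (hS : S.IsHermitian) (hSd : ∀ i j, d j = 0 → S i j = 0) :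
    ∃ ε : ℝ, 0 < ε ∧ ε • S ≤ diagonal (RCLike.ofReal ∘ d) := by
  set P : Matrix n n 𝕜 := diagonal fun i => if d i = 0 then 0 else 1
  have hP : IsSelfAdjoint P := by
    simp only [IsSelfAdjoint, P, star_eq_conjTranspose, diagonal_conjTranspose]
    congr 1; ext i; by_cases hi : d i = 0 <;> simp [hi]
  have hPSP : P * S * P = S := by
    ext i j
    have hrow : d i = 0 → S i j = 0 := fun hi => by
      rw [← hS.apply i j, hSd j i hi, star_zero]
    by_cases hi : d i = 0 <;> by_cases hj : d j = 0 <;> simp [P, hi, hj, hSd i j, hrow]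
  obtain ⟨t, ht, hSt⟩ := hS.exists_le_smul_one
  obtain ⟨c, hc, hcd⟩ := exists_pos_le_of_ne_zero hd
  refine ⟨c / t, by positivity, ?_⟩
  have hSc : (c / t) • S ≤ c • (1 : Matrix n n 𝕜) := by
    calc (c / t) • S ≤ (c / t) • t • (1 : Matrix n n 𝕜) :=
          smul_le_smul_of_nonneg_left hSt (by positivity)
      _ = c • 1 := by rw [smul_smul, div_mul_cancel₀ c ht.ne']
  -- `P` projects onto the support of `d`: `S = P S P ≤ t P`, and `c P ≤ diagonal d`
  calc (c / t) • S = P * ((c / t) • S) * P := by rw [mul_smul_comm, smul_mul_assoc, hPSP]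
    _ ≤ P * (c • 1) * P := hP.conjugate_le_conjugate hSc
    _ = diagonal fun i => if d i = 0 then 0 else (c : 𝕜) := by
      ext i j
      rcases eq_or_ne i j with rfl | hij
      · by_cases hi : d i = 0 <;> simp [P, hi, RCLike.real_smul_eq_coe_mul]
      · simp [P, hij]
    _ ≤ diagonal (RCLike.ofReal ∘ d) := by
      rw [le_iff, diagonal_sub, posSemidef_diagonal_iff]
      intro i
      by_cases hi : d i = 0
      · simp [hi]
      · simpa [hi] using hcd i hi

lemma PosSemidef.exists_pos_smul_le_of_ker_le {ρ σ : Matrix n n 𝕜} (hρ : ρ.PosSemidef)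
    (hσ : σ.IsHermitian) (h : LinearMap.ker ρ.mulVecLin ≤ LinearMap.ker σ.mulVecLin) :
    ∃ ε : ℝ, 0 < ε ∧ ε • σ ≤ ρ := by
  set U : Matrix n n 𝕜 := (hρ.isHermitian.eigenvectorUnitary : Matrix n n 𝕜)
  have hD : star U * ρ * U = diagonal (RCLike.ofReal ∘ hρ.isHermitian.eigenvalues) := by
    simpa [Unitary.conjStarAlgAut_apply] using
      hρ.isHermitian.conjStarAlgAut_star_eigenvectorUnitary
  have hS : (star U * σ * U).IsHermitian := by
    simpa [star_eq_conjTranspose] using isHermitian_conjTranspose_mul_mul U hσ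
  have hSd : ∀ i j, hρ.isHermitian.eigenvalues j = 0 → (star U * σ * U) i j = 0 := by
    intro i j hj
    have hb : σ *ᵥ ⇑(hρ.isHermitian.eigenvectorBasis j) = 0 := by
      refine h ?_
      rw [LinearMap.mem_ker, mulVecLin_apply, hρ.isHermitian.mulVec_eigenvectorBasis, hj,
        zero_smul]
    have hcol : (star U * σ * U) *ᵥ Pi.single j 1 = 0 := by
      rw [← mulVec_mulVec, hρ.isHermitian.eigenvectorUnitary_mulVec, ← mulVec_mulVec, hb,
        mulVec_zero]
    simpa [mulVec_single_one] using congrFun hcol i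
  obtain ⟨ε, hε, hle⟩ := hS.exists_pos_smul_le_diagonal hρ.eigenvalues_nonneg hSd
  refine ⟨ε, hε, ?_⟩
  have hUU : U * star U = 1 := Unitary.coe_mul_star_self _
  simpa [← hD, ← mul_assoc, mul_assoc _ _ (star U), hUU] using
    star_right_conjugate_le_conjugate hle U

end Matrix

namespace QMarginal

lemma eq_of_map_eq_of_smul_le {ι N : Type*} [Fintype ι] [DecidableEq ι] [AddCommGroup N]
    [Module ℂ N] {f : Matrix ι ι ℂ →ₗ[ℂ] N} {ρ σ : Matrix ι ι ℂ}
    (huniq : ∀ τ, IsDensity τ → f τ = f ρ → τ = ρ) (hρ : ρ.trace = 1) (hσ : σ.trace = 1)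
    {ε : ℝ} (hε : 0 < ε) (hle : ε • σ ≤ ρ) {τ : Matrix ι ι ℂ} (hτ : IsDensity τ)
    (hfτ : f τ = f σ) : τ = σ := by
  have hdens : IsDensity (ρ + ε • (τ - σ)) := by
    refine ⟨?_, ?_⟩
    · rw [smul_sub, ← add_sub_assoc, add_sub_right_comm]
      exact (le_iff.mp hle).add (hτ.1.smul hε.le)
    · rw [trace_add, trace_smul, trace_sub, hρ, hσ, hτ.2, sub_self, smul_zero, add_zero]
  have hfib : f (ρ + ε • (τ - σ)) = f ρ := by
    rw [map_add, LinearMap.map_smul_of_tower, map_sub, hfτ, sub_self, smul_zero, add_zero]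
  have := huniq _ hdens hfib
  rwa [add_eq_left, smul_eq_zero_iff_right hε.ne', sub_eq_zero] at this

section

variable {dA dB dC : ℕ}

noncomputable def marginals : Tri dA dB dC →ₗ[ℂ] Bip dA dB × Bip dA dC × Bip dB dC where
  toFun τ := (trC τ, trB τ, trA τ)
  map_add' τ τ' := by
    ext <;> simp [trC, trB, trA, Finset.sum_add_distrib]
  map_smul' c τ := by
    ext <;> simp [trC, trB, trA, Finset.mul_sum]

lemma marginals_eq_iff {τ τ' : Tri dA dB dC} :
    marginals τ = marginals τ' ↔ trC τ = trC τ' ∧ trB τ = trB τ' ∧ trA τ = trA τ' := by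
  simp [marginals]

end

/-- if ρ_ABC is uniquely determined by its two-body reductions and
Range(σ_ABC) ⊆ Range(ρ_ABC), then σ_ABC is also uniquely determined by its
two-body reductions. -/
theorem stmt_18 {dA dB dC : ℕ} (ρABC : Tri dA dB dC) (hρ : IsDensity ρABC)
    (huniq : ∀ τ : Tri dA dB dC, IsDensity τ →
      trC τ = trC ρABC → trB τ = trB ρABC → trA τ = trA ρABC → τ = ρABC)
    (σABC : Tri dA dB dC) (hσ : IsDensity σABC)
    (hrange : LinearMap.range σABC.mulVecLin ≤ LinearMap.range ρABC.mulVecLin) :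
    ∀ τ : Tri dA dB dC, IsDensity τ →
      trC τ = trC σABC → trB τ = trB σABC → trA τ = trA σABC → τ = σABC := by
  obtain ⟨ε, hε, hle⟩ := hρ.1.exists_pos_smul_le_of_ker_le hσ.1.isHermitian
    (hρ.1.isHermitian.ker_le_of_range_le hσ.1.isHermitian hrange)
  intro τ hτ hC hB hA
  refine eq_of_map_eq_of_smul_le (f := marginals) (fun τ' hτ' h => ?_) hρ.2 hσ.2 hε hle hτ
    (marginals_eq_iff.mpr ⟨hC, hB, hA⟩)
  obtain ⟨hC', hB', hA'⟩ := marginals_eq_iff.mp h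
  exact huniq τ' hτ' hC' hB' hA'
end QMarginal
end
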